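/- arXiv:1603.07280 — 7 statements merged into one kernel-verified Lean document; each statement's English description precedes it below -/
import Mathlib

section
/- Let n > 2k, q > k and λ₀ > 0. Assume there exists a classical radial solution of (P_{λ₀}). Then for every λ ∈ (0, λ₀) the problem (P_λ) has a maximal bounded classical radial solution, i.e. a classical radial solution u_max such that u ≤ u_max on [0,1] for every radial subsolution u. Moreover, the maximal solutions are monotone in λ: if 0 < λ₁ < λ₂ < λ₀ and u_{λ₁}, u_{λ₂} are the corresponding maximal solutions, then u_{λ₂} ≤ u_{λ₁} on [0,1]. -/
open Real Set Filter MeasureTheory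

noncomputable section

/-- `c_{n,k} = (1/n) * binom(n,k)`. -/
def cnk (n k : ℕ) : ℝ := (n.choose k : ℝ) / n

/-- The critical exponent `q*(k,σ) = ((n+2)k + σ(k+1))/(n-2k)`. -/
def qstar (n k : ℕ) (σ : ℝ) : ℝ :=
  (((n : ℝ) + 2) * k + σ * ((k : ℝ) + 1)) / ((n : ℝ) - 2 * k)

/-- The Joseph–Lundgren type exponent `q_JL(k,σ)` (finite formula, valid
for `n > 2k + 8 + 4σ/k`). -/
def qJL (n k : ℕ) (σ : ℝ) : ℝ :=
  (k : ℝ) *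
    (((k : ℝ) * ((k : ℝ) + 1) * n - (k : ℝ) ^ 2 * (2 - σ) + 2 * k + σ -
        2 * Real.sqrt ((k : ℝ) * (2 * k + σ) * (((k : ℝ) + 1) * n - (k : ℝ) * (2 - σ)))) /
      ((k : ℝ) * ((k : ℝ) + 1) * n - 2 * (k : ℝ) ^ 2 * ((k : ℝ) + 3) - 2 * k * σ -
        2 * Real.sqrt ((k : ℝ) * (2 * k + σ) * (((k : ℝ) + 1) * n - (k : ℝ) * (2 - σ)))))

/-- `λ̃(k,σ) = c_{n,k} τ_σ^k (n - 2k - k τ_σ)` with `τ_σ = (2k+σ)/(q-k)`. -/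
def lamTilde (n k : ℕ) (q σ : ℝ) : ℝ :=
  cnk n k * ((2 * (k : ℝ) + σ) / (q - k)) ^ k *
    ((n : ℝ) - 2 * k - (k : ℝ) * ((2 * (k : ℝ) + σ) / (q - k)))

/-- `μ*(k,σ) = binom(n,k) ((n+σ)/n) (n-2k)^k / (k+1)^{k+1}`. -/
def muStar (n k : ℕ) (σ : ℝ) : ℝ :=
  (n.choose k : ℝ) * (((n : ℝ) + σ) / n) * ((n : ℝ) - 2 * k) ^ k / ((k : ℝ) + 1) ^ (k + 1)

/-- A classical radial solution of problem `(P_λ)`: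
`u ∈ C²((0,1)) ∩ C¹([0,1])`, `u'(0) = 0`, `u(1) = 0`, `u < 0` on `(0,1)`,
`(r^{n-i} (u')^i)' ≥ 0` on `(0,1)` for `i = 1,…,k`, and
`c_{n,k} r^{1-n} (r^{n-k}(u')^k)' = λ r^σ (1-u)^q` on `(0,1)`. -/
def IsRadialSol (n k : ℕ) (q σ lam : ℝ) (u : ℝ → ℝ) : Prop :=
  ContDiffOn ℝ 2 u (Ioo 0 1) ∧ ContDiffOn ℝ 1 u (Icc 0 1) ∧
  deriv u 0 = 0 ∧ u 1 = 0 ∧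
  (∀ r ∈ Ioo (0:ℝ) 1, u r < 0) ∧
  (∀ i : ℕ, 1 ≤ i → i ≤ k →
    ∀ r ∈ Ioo (0:ℝ) 1, 0 ≤ deriv (fun s => s ^ ((n : ℝ) - i) * (deriv u s) ^ i) r) ∧
  (∀ r ∈ Ioo (0:ℝ) 1,
    cnk n k * r ^ (1 - (n : ℝ)) *
        deriv (fun s => s ^ ((n : ℝ) - k) * (deriv u s) ^ k) r =
      lam * r ^ σ * (1 - u r) ^ q)

/-- A radial subsolution of `(P_λ)`. -/
def IsRadialSubsol (n k : ℕ) (q σ lam : ℝ) (u : ℝ → ℝ) : Prop :=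
  ContDiffOn ℝ 2 u (Ioo 0 1) ∧ ContDiffOn ℝ 1 u (Icc 0 1) ∧
  (∀ i : ℕ, 1 ≤ i → i ≤ k →
    ∀ r ∈ Ioo (0:ℝ) 1, 0 ≤ deriv (fun s => s ^ ((n : ℝ) - i) * (deriv u s) ^ i) r) ∧
  (∀ r ∈ Ioo (0:ℝ) 1,
    lam * r ^ σ * (1 - u r) ^ q ≤
      cnk n k * r ^ (1 - (n : ℝ)) *
        deriv (fun s => s ^ ((n : ℝ) - k) * (deriv u s) ^ k) r) ∧
  u 1 ≤ 0

/-!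
The maximal solution is obtained by monotone iteration. With `a = λ / c_{n,k}`, the operator
`T φ (r) = radialOp φ r = -∫_r^1 (s^{k-n} ∫_0^s a t^{n-1+σ} (1 - φ t)^q dt)^{1/k} ds`
sends `φ ≤ 0` to the radial solution of `c_{n,k} r^{1-n} (r^{n-k} (u')^k)' = λ r^σ (1 - φ)^q`
with `u'(0) = 0` and `u(1) = 0`. It is order preserving, and every radial subsolution lying
below `φ` lies below `T φ`, because its derivative dominates that of `T φ`. Hence the iterates
`T^m 0` decrease, stay above every subsolution (in particular above the solution for `λ₀`,
which is a subsolution for `λ < λ₀`), and converge by dominated convergence to a fixed point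
of `T`: a solution lying above every subsolution. Maximal solutions are ordered in `λ` because
a solution for the larger parameter is a subsolution for the smaller one.
-/

open scoped Topology

lemma MonotoneOn.deriv_nonneg_of_isOpen {f : ℝ → ℝ} {s : Set ℝ} (hf : MonotoneOn f s)
    (hs : IsOpen s) {x : ℝ} (hx : x ∈ s) : 0 ≤ deriv f x :=
  derivWithin_of_isOpen (f := f) hs hx ▸ hf.derivWithin_nonneg

lemma nonneg_of_monotoneOn_of_tendsto_zero {f : ℝ → ℝ} {b : ℝ} (hm : MonotoneOn f (Ioo 0 b))
    (hl : Tendsto f (𝓝[>] 0) (𝓝 0)) {s : ℝ} (hs : s ∈ Ioo 0 b) : 0 ≤ f s :=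
  le_of_tendsto hl (eventually_of_mem (Ioo_mem_nhdsGT hs.1) fun _ ht =>
    hm ⟨ht.1, ht.2.trans hs.2⟩ hs ht.2.le)

lemma tendsto_rpow_mul_of_bounded {p : ℝ} (hp : 0 < p) {g : ℝ → ℝ} {C : ℝ}
    (hg : ∀ x ∈ Ioo (0:ℝ) 1, |g x| ≤ C) : Tendsto (fun x => x ^ p * g x) (𝓝[>] 0) (𝓝 0) := by
  refine Tendsto.zero_mul_isBoundedUnder_le ?_
    ⟨C, eventually_map.2 (eventually_of_mem (Ioo_mem_nhdsGT one_pos) hg)⟩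
  simpa [zero_rpow hp.ne'] using
    ((continuous_rpow_const hp.le).tendsto (0 : ℝ)).mono_left nhdsWithin_le_nhds

namespace RadialKHessian

section Operator

variable {n k : ℕ} {q σ a : ℝ} {φ ψ : ℝ → ℝ}

def IsAdmissible (φ : ℝ → ℝ) : Prop :=
  Measurable φ ∧ (∀ t ∈ Icc (0:ℝ) 1, φ t ≤ 0) ∧ ∀ R : ℝ, ∃ C, ∀ t ∈ Icc (-R) R, |φ t| ≤ C

lemma IsAdmissible.of_continuous (hc : Continuous φ) (h0 : ∀ t ∈ Icc (0:ℝ) 1, φ t ≤ 0) :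
    IsAdmissible φ :=
  ⟨hc.measurable, h0, fun _ => isCompact_Icc.exists_bound_of_continuousOn hc.continuousOn⟩

def source (n : ℕ) (q σ a : ℝ) (φ : ℝ → ℝ) (t : ℝ) : ℝ :=
  a * t ^ ((n : ℝ) - 1 + σ) * (1 - φ t) ^ q

def flux (n : ℕ) (q σ a : ℝ) (φ : ℝ → ℝ) (r : ℝ) : ℝ :=
  ∫ t in (0:ℝ)..r, source n q σ a φ t

def slope (n k : ℕ) (q σ a : ℝ) (φ : ℝ → ℝ) (s : ℝ) : ℝ :=
  if 0 < s then (s ^ ((k : ℝ) - n) * flux n q σ a φ s) ^ (k : ℝ)⁻¹ else 0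

def radialOp (n k : ℕ) (q σ a : ℝ) (φ : ℝ → ℝ) (r : ℝ) : ℝ :=
  ∫ s in (1:ℝ)..r, slope n k q σ a φ s

lemma exponent_nonneg (hn : 1 ≤ n) (hσ : 0 ≤ σ) : 0 ≤ (n : ℝ) - 1 + σ := by
  have : (1 : ℝ) ≤ n := by exact_mod_cast hn
  linarith

lemma measurable_source (hφ : Measurable φ) : Measurable (source n q σ a φ) := by
  unfold source; fun_prop

lemma abs_source_le (hn : 1 ≤ n) (hσ : 0 ≤ σ) (hq : 0 ≤ q) {t R C : ℝ} (htR : |t| ≤ R)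
    (hC : |φ t| ≤ C) : |source n q σ a φ t| ≤ |a| * R ^ ((n : ℝ) - 1 + σ) * (1 + C) ^ q := by
  have he := exponent_nonneg hn hσ
  have hpow : |t ^ ((n : ℝ) - 1 + σ)| ≤ R ^ ((n : ℝ) - 1 + σ) :=
    (abs_rpow_le_abs_rpow _ _).trans (rpow_le_rpow (abs_nonneg _) htR he)
  have hbase : |(1 - φ t) ^ q| ≤ (1 + C) ^ q :=
    (abs_rpow_le_abs_rpow _ _).trans
      (rpow_le_rpow (abs_nonneg _) ((abs_sub _ _).trans (by rw [abs_one]; linarith)) hq)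
  rw [source, abs_mul, abs_mul]
  exact mul_le_mul (mul_le_mul_of_nonneg_left hpow (abs_nonneg a)) hbase (abs_nonneg _)
    (mul_nonneg (abs_nonneg a) ((abs_nonneg _).trans hpow))

lemma intervalIntegrable_source (hn : 1 ≤ n) (hσ : 0 ≤ σ) (hq : 0 ≤ q) (hφ : IsAdmissible φ)
    (b c : ℝ) : IntervalIntegrable (source n q σ a φ) volume b c := by
  obtain ⟨C, hC⟩ := hφ.2.2 (|b| + |c|)
  have hsub : uIcc b c ⊆ Icc (-(|b| + |c|)) (|b| + |c|) := by
    refine uIcc_subset_Icc ⟨?_, ?_⟩ ⟨?_, ?_⟩ <;>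
      linarith [neg_abs_le b, neg_abs_le c, le_abs_self b, le_abs_self c, abs_nonneg b,
        abs_nonneg c]
  refine (Measure.integrableOn_of_bounded (M := |a| * (|b| + |c|) ^ ((n : ℝ) - 1 + σ) * (1 + C) ^ q)
    measure_Icc_lt_top.ne
    (measurable_source hφ.1).aestronglyMeasurable ?_).intervalIntegrable
  refine (ae_restrict_mem measurableSet_uIcc).mono fun t ht => ?_
  rw [norm_eq_abs]
  exact abs_source_le hn hσ hq (abs_le.2 (hsub ht)) (hC t (hsub ht))

lemma continuousAt_source (hn : 1 ≤ n) (hσ : 0 ≤ σ) (hq : 0 ≤ q) {t : ℝ}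
    (hφ : ContinuousAt φ t) : ContinuousAt (source n q σ a φ) t :=
  (continuousAt_const.mul ((continuous_rpow_const (exponent_nonneg hn hσ)).continuousAt)).mul
    ((continuousAt_const.sub hφ).rpow_const (Or.inr hq))

lemma source_nonneg (ha : 0 ≤ a) {t : ℝ} (ht : 0 ≤ t) (hφt : φ t ≤ 0) :
    0 ≤ source n q σ a φ t :=
  mul_nonneg (mul_nonneg ha (rpow_nonneg ht _)) (rpow_nonneg (by linarith) _)

lemma source_pos (ha : 0 < a) {t : ℝ} (ht : 0 < t) (hφt : φ t ≤ 0) :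
    0 < source n q σ a φ t :=
  mul_pos (mul_pos ha (rpow_pos_of_pos ht _)) (rpow_pos_of_pos (by linarith) _)

lemma source_anti (ha : 0 ≤ a) (hq : 0 ≤ q) {t : ℝ} (ht : 0 ≤ t) (hle : φ t ≤ ψ t)
    (hψt : ψ t ≤ 0) : source n q σ a ψ t ≤ source n q σ a φ t :=
  mul_le_mul_of_nonneg_left (rpow_le_rpow (by linarith) (by linarith) hq)
    (mul_nonneg ha (rpow_nonneg ht _))

lemma hasDerivAt_flux (hn : 1 ≤ n) (hσ : 0 ≤ σ) (hq : 0 ≤ q) (hφ : IsAdmissible φ) {r : ℝ}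
    (hr : ContinuousAt φ r) : HasDerivAt (flux n q σ a φ) (source n q σ a φ r) r :=
  intervalIntegral.integral_hasDerivAt_right (intervalIntegrable_source hn hσ hq hφ 0 r)
    (measurable_source hφ.1).stronglyMeasurable.stronglyMeasurableAtFilter
    (continuousAt_source hn hσ hq hr)

lemma continuous_flux (hn : 1 ≤ n) (hσ : 0 ≤ σ) (hq : 0 ≤ q) (hφ : IsAdmissible φ) :
    Continuous (flux n q σ a φ) :=
  intervalIntegral.continuous_primitive (intervalIntegrable_source hn hσ hq hφ) 0

lemma flux_nonneg (ha : 0 ≤ a) (hφ : IsAdmissible φ) {r : ℝ} (hr : r ∈ Icc (0:ℝ) 1) :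
    0 ≤ flux n q σ a φ r :=
  intervalIntegral.integral_nonneg hr.1 fun t ht =>
    source_nonneg ha ht.1 (hφ.2.1 t ⟨ht.1, ht.2.trans hr.2⟩)

lemma flux_pos (hn : 1 ≤ n) (hσ : 0 ≤ σ) (hq : 0 ≤ q) (ha : 0 < a) (hφ : IsAdmissible φ)
    {r : ℝ} (hr : r ∈ Ioc (0:ℝ) 1) : 0 < flux n q σ a φ r :=
  intervalIntegral.intervalIntegral_pos_of_pos_on (intervalIntegrable_source hn hσ hq hφ 0 r)
    (fun t ht => source_pos ha ht.1 (hφ.2.1 t ⟨ht.1.le, ht.2.le.trans hr.2⟩)) hr.1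

lemma flux_anti (hn : 1 ≤ n) (hσ : 0 ≤ σ) (hq : 0 ≤ q) (ha : 0 ≤ a) (hφ : IsAdmissible φ)
    (hψ : IsAdmissible ψ) (hle : ∀ t ∈ Icc (0:ℝ) 1, φ t ≤ ψ t) {r : ℝ} (hr : r ∈ Icc (0:ℝ) 1) :
    flux n q σ a ψ r ≤ flux n q σ a φ r :=
  intervalIntegral.integral_mono_on hr.1 (intervalIntegrable_source hn hσ hq hψ 0 r)
    (intervalIntegrable_source hn hσ hq hφ 0 r) fun t ht =>
      have ht' : t ∈ Icc (0:ℝ) 1 := ⟨ht.1, ht.2.trans hr.2⟩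
      source_anti ha hq ht.1 (hle t ht') (hψ.2.1 t ht')

lemma flux_monotoneOn (hn : 1 ≤ n) (hσ : 0 ≤ σ) (hq : 0 ≤ q) (ha : 0 ≤ a)
    (hφ : IsAdmissible φ) : MonotoneOn (flux n q σ a φ) (Icc 0 1) := by
  intro x hx y hy hxy
  rw [← sub_nonneg, flux, flux, intervalIntegral.integral_interval_sub_left
    (intervalIntegrable_source hn hσ hq hφ 0 y) (intervalIntegrable_source hn hσ hq hφ 0 x)]
  exact intervalIntegral.integral_nonneg hxy fun t ht =>
    source_nonneg ha (hx.1.trans ht.1) (hφ.2.1 t ⟨hx.1.trans ht.1, ht.2.trans hy.2⟩)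

lemma flux_le (hn : 1 ≤ n) (hσ : 0 ≤ σ) (hq : 0 ≤ q) (ha : 0 ≤ a) (hφ : IsAdmissible φ)
    {C : ℝ} (hC : ∀ t ∈ Icc (0:ℝ) 1, |φ t| ≤ C) {r : ℝ} (hr : r ∈ Icc (0:ℝ) 1) :
    flux n q σ a φ r ≤ a * (1 + C) ^ q / (n + σ) * r ^ ((n : ℝ) + σ) := by
  have he := exponent_nonneg hn hσ
  have hbound : ∀ t ∈ Icc (0:ℝ) r,
      source n q σ a φ t ≤ a * (1 + C) ^ q * t ^ ((n : ℝ) - 1 + σ) := by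
    intro t ht
    have ht' : t ∈ Icc (0:ℝ) 1 := ⟨ht.1, ht.2.trans hr.2⟩
    have hbase : (1 - φ t) ^ q ≤ (1 + C) ^ q :=
      rpow_le_rpow (by linarith [hφ.2.1 t ht']) (by linarith [(abs_le.1 (hC t ht')).1]) hq
    calc source n q σ a φ t = a * t ^ ((n : ℝ) - 1 + σ) * (1 - φ t) ^ q := rfl
      _ ≤ a * t ^ ((n : ℝ) - 1 + σ) * (1 + C) ^ q :=
        mul_le_mul_of_nonneg_left hbase (mul_nonneg ha (rpow_nonneg ht.1 _))
      _ = a * (1 + C) ^ q * t ^ ((n : ℝ) - 1 + σ) := by ring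
  calc flux n q σ a φ r ≤ ∫ t in (0:ℝ)..r, a * (1 + C) ^ q * t ^ ((n : ℝ) - 1 + σ) :=
        intervalIntegral.integral_mono_on hr.1 (intervalIntegrable_source hn hσ hq hφ 0 r)
          ((intervalIntegral.intervalIntegrable_rpow (Or.inl he)).const_mul _) hbound
    _ = a * (1 + C) ^ q / (n + σ) * r ^ ((n : ℝ) + σ) := by
      rw [intervalIntegral.integral_const_mul, integral_rpow (Or.inl (by linarith)),
        zero_rpow (by linarith), show (n : ℝ) - 1 + σ + 1 = n + σ by ring]
      ring

lemma slope_of_pos {s : ℝ} (hs : 0 < s) :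
    slope n k q σ a φ s = (s ^ ((k : ℝ) - n) * flux n q σ a φ s) ^ (k : ℝ)⁻¹ :=
  if_pos hs

lemma slope_of_nonpos {s : ℝ} (hs : s ≤ 0) : slope n k q σ a φ s = 0 :=
  if_neg hs.not_gt

lemma slope_nonneg (ha : 0 ≤ a) (hφ : IsAdmissible φ) {s : ℝ} (hs : s ≤ 1) :
    0 ≤ slope n k q σ a φ s := by
  rcases le_or_gt s 0 with h0 | h0
  · rw [slope_of_nonpos h0]
  · rw [slope_of_pos h0]
    exact rpow_nonneg (mul_nonneg (rpow_nonneg h0.le _) (flux_nonneg ha hφ ⟨h0.le, hs⟩)) _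

lemma slope_pos (hn : 1 ≤ n) (hσ : 0 ≤ σ) (hq : 0 ≤ q) (ha : 0 < a) (hφ : IsAdmissible φ)
    {s : ℝ} (hs : s ∈ Ioc (0:ℝ) 1) : 0 < slope n k q σ a φ s := by
  rw [slope_of_pos hs.1]
  exact rpow_pos_of_pos (mul_pos (rpow_pos_of_pos hs.1 _) (flux_pos hn hσ hq ha hφ hs)) _

lemma rpow_mul_slope_pow (hk : 1 ≤ k) (ha : 0 ≤ a) (hφ : IsAdmissible φ) {s : ℝ}
    (hs : s ∈ Ioc (0:ℝ) 1) :
    s ^ ((n : ℝ) - k) * slope n k q σ a φ s ^ k = flux n q σ a φ s := by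
  have hbase : 0 ≤ s ^ ((k : ℝ) - n) * flux n q σ a φ s :=
    mul_nonneg (rpow_nonneg hs.1.le _) (flux_nonneg ha hφ ⟨hs.1.le, hs.2⟩)
  rw [slope_of_pos hs.1, ← rpow_natCast, ← rpow_mul hbase,
    inv_mul_cancel₀ (Nat.cast_ne_zero.2 (by omega)), rpow_one, ← mul_assoc, ← rpow_add hs.1]
  norm_num

lemma slope_le (hn : 1 ≤ n) (hσ : 0 ≤ σ) (hq : 0 ≤ q) (ha : 0 ≤ a) (hφ : IsAdmissible φ)
    {C : ℝ} (hC : ∀ t ∈ Icc (0:ℝ) 1, |φ t| ≤ C) {s : ℝ} (hs : s ∈ Icc (0:ℝ) 1) :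
    slope n k q σ a φ s ≤ (a * (1 + C) ^ q / (n + σ) * s ^ ((k : ℝ) + σ)) ^ (k : ℝ)⁻¹ := by
  have hC0 : 0 ≤ C := (abs_nonneg _).trans (hC 0 (left_mem_Icc.2 zero_le_one))
  rcases hs.1.eq_or_lt with h0 | h0
  · rw [slope_of_nonpos h0.ge]
    exact rpow_nonneg (mul_nonneg (by positivity) (rpow_nonneg hs.1 _)) _
  rw [slope_of_pos h0]
  refine rpow_le_rpow (mul_nonneg (rpow_nonneg h0.le _) (flux_nonneg ha hφ hs)) ?_ (by positivity)
  calc s ^ ((k : ℝ) - n) * flux n q σ a φ s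
      ≤ s ^ ((k : ℝ) - n) * (a * (1 + C) ^ q / (n + σ) * s ^ ((n : ℝ) + σ)) :=
        mul_le_mul_of_nonneg_left (flux_le hn hσ hq ha hφ hC hs) (rpow_nonneg h0.le _)
    _ = a * (1 + C) ^ q / (n + σ) * s ^ ((k : ℝ) + σ) := by
      rw [mul_left_comm, ← rpow_add h0]
      ring_nf

lemma continuous_slope (hk : 1 ≤ k) (hn : 1 ≤ n) (hσ : 0 ≤ σ) (hq : 0 ≤ q) (ha : 0 ≤ a)
    (hφ : IsAdmissible φ) : Continuous (slope n k q σ a φ) := by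
  rw [continuous_iff_continuousAt]
  intro s
  rcases lt_trichotomy s 0 with hs | rfl | hs
  · exact (continuousAt_const (y := (0:ℝ))).congr
      (eventually_of_mem (Iio_mem_nhds hs) fun t ht => (slope_of_nonpos (le_of_lt ht)).symm)
  · -- squeeze between `0` and the bound of `slope_le`, which is continuous and vanishes at `0`
    obtain ⟨C, hC⟩ := hφ.2.2 1
    have hC' : ∀ t ∈ Icc (0:ℝ) 1, |φ t| ≤ C := fun t ht => hC t ⟨by linarith [ht.1], ht.2⟩
    have hk' : (0 : ℝ) < k := by exact_mod_cast hk
    set bound : ℝ → ℝ := fun t => (a * (1 + C) ^ q / (n + σ) * t ^ ((k : ℝ) + σ)) ^ (k : ℝ)⁻¹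
    have hcont : Continuous bound :=
      (continuous_const.mul (continuous_rpow_const (by positivity))).rpow_const
        fun _ => Or.inr (by positivity)
    have hbound : Tendsto bound (𝓝 0) (𝓝 0) := by
      simpa [bound, zero_rpow (by positivity : (k : ℝ) + σ ≠ 0),
        zero_rpow (inv_ne_zero hk'.ne')] using hcont.tendsto 0
    rw [continuousAt_iff_continuous_left_right, ContinuousWithinAt, ContinuousWithinAt,
      slope_of_nonpos le_rfl]
    refine ⟨tendsto_const_nhds.congr' (eventually_nhdsWithin_of_forall fun t ht =>
      (slope_of_nonpos ht).symm), ?_⟩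
    have hI : Icc (0:ℝ) 1 ∈ 𝓝[≥] (0:ℝ) := Icc_mem_nhdsGE zero_lt_one
    exact squeeze_zero' (eventually_of_mem hI fun t ht => slope_nonneg ha hφ ht.2)
      (eventually_of_mem hI fun t ht => slope_le hn hσ hq ha hφ hC' ht)
      (hbound.mono_left nhdsWithin_le_nhds)
  · refine ((((continuousAt_id.rpow_const (Or.inl hs.ne')).mul
      (continuous_flux hn hσ hq hφ).continuousAt).rpow_const (Or.inr (by positivity)))).congr
      (eventually_of_mem (Ioi_mem_nhds hs) fun t ht => (slope_of_pos ht).symm)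

lemma slope_anti (hn : 1 ≤ n) (hσ : 0 ≤ σ) (hq : 0 ≤ q) (ha : 0 ≤ a) (hφ : IsAdmissible φ)
    (hψ : IsAdmissible ψ) (hle : ∀ t ∈ Icc (0:ℝ) 1, φ t ≤ ψ t) {s : ℝ} (hs : s ∈ Icc (0:ℝ) 1) :
    slope n k q σ a ψ s ≤ slope n k q σ a φ s := by
  rcases hs.1.eq_or_lt with h0 | h0
  · rw [slope_of_nonpos h0.ge, slope_of_nonpos h0.ge]
  rw [slope_of_pos h0, slope_of_pos h0]
  exact rpow_le_rpow (mul_nonneg (rpow_nonneg h0.le _) (flux_nonneg ha hψ hs))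
    (mul_le_mul_of_nonneg_left (flux_anti hn hσ hq ha hφ hψ hle hs) (rpow_nonneg h0.le _))
    (by positivity)

lemma contDiffOn_flux (hn : 1 ≤ n) (hσ : 0 ≤ σ) (hq : 0 ≤ q) (hφ : IsAdmissible φ)
    (hc : ContinuousOn φ (Ioo 0 1)) : ContDiffOn ℝ 1 (flux n q σ a φ) (Ioo 0 1) := by
  have hd : ∀ x ∈ Ioo (0:ℝ) 1, HasDerivAt (flux n q σ a φ) (source n q σ a φ x) x :=
    fun x hx => hasDerivAt_flux hn hσ hq hφ (hc.continuousAt (isOpen_Ioo.mem_nhds hx))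
  rw [show (1 : WithTop ℕ∞) = 0 + 1 from rfl, contDiffOn_succ_iff_deriv_of_isOpen isOpen_Ioo]
  refine ⟨fun x hx => (hd x hx).differentiableAt.differentiableWithinAt, by simp, ?_⟩
  refine contDiffOn_zero.2 fun x hx => ?_
  exact ((continuousAt_source hn hσ hq (hc.continuousAt (isOpen_Ioo.mem_nhds hx))).congr
    (eventually_of_mem (isOpen_Ioo.mem_nhds hx) fun y hy =>
      (hd y hy).deriv.symm)).continuousWithinAt

lemma contDiffOn_slope (hn : 1 ≤ n) (hσ : 0 ≤ σ) (hq : 0 ≤ q) (ha : 0 < a) (hφ : IsAdmissible φ)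
    (hc : ContinuousOn φ (Ioo 0 1)) : ContDiffOn ℝ 1 (slope n k q σ a φ) (Ioo 0 1) := by
  have hpos : ∀ s ∈ Ioo (0:ℝ) 1, s ^ ((k : ℝ) - n) * flux n q σ a φ s ≠ 0 := fun s hs =>
    (mul_pos (rpow_pos_of_pos hs.1 _) (flux_pos hn hσ hq ha hφ ⟨hs.1, hs.2.le⟩)).ne'
  refine ((((contDiffOn_id.rpow_const_of_ne fun s hs => hs.1.ne').mul
    (contDiffOn_flux hn hσ hq hφ hc)).rpow_const_of_ne hpos)).congr fun s hs => slope_of_pos hs.1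

lemma hasDerivAt_radialOp (hk : 1 ≤ k) (hn : 1 ≤ n) (hσ : 0 ≤ σ) (hq : 0 ≤ q) (ha : 0 ≤ a)
    (hφ : IsAdmissible φ) (r : ℝ) :
    HasDerivAt (radialOp n k q σ a φ) (slope n k q σ a φ r) r :=
  have hc := continuous_slope hk hn hσ hq ha hφ
  intervalIntegral.integral_hasDerivAt_right (hc.intervalIntegrable 1 r)
    hc.stronglyMeasurable.stronglyMeasurableAtFilter hc.continuousAt

lemma deriv_radialOp (hk : 1 ≤ k) (hn : 1 ≤ n) (hσ : 0 ≤ σ) (hq : 0 ≤ q) (ha : 0 ≤ a)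
    (hφ : IsAdmissible φ) : deriv (radialOp n k q σ a φ) = slope n k q σ a φ :=
  funext fun r => (hasDerivAt_radialOp hk hn hσ hq ha hφ r).deriv

lemma continuous_radialOp (hk : 1 ≤ k) (hn : 1 ≤ n) (hσ : 0 ≤ σ) (hq : 0 ≤ q) (ha : 0 ≤ a)
    (hφ : IsAdmissible φ) : Continuous (radialOp n k q σ a φ) :=
  continuous_iff_continuousAt.2 fun r => (hasDerivAt_radialOp hk hn hσ hq ha hφ r).continuousAt

lemma contDiff_radialOp (hk : 1 ≤ k) (hn : 1 ≤ n) (hσ : 0 ≤ σ) (hq : 0 ≤ q) (ha : 0 ≤ a)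
    (hφ : IsAdmissible φ) : ContDiff ℝ 1 (radialOp n k q σ a φ) :=
  contDiff_one_iff_deriv.2 ⟨fun r => (hasDerivAt_radialOp hk hn hσ hq ha hφ r).differentiableAt,
    deriv_radialOp hk hn hσ hq ha hφ ▸ continuous_slope hk hn hσ hq ha hφ⟩

lemma contDiffOn_radialOp (hk : 1 ≤ k) (hn : 1 ≤ n) (hσ : 0 ≤ σ) (hq : 0 ≤ q) (ha : 0 < a)
    (hφ : IsAdmissible φ) (hc : ContinuousOn φ (Ioo 0 1)) :
    ContDiffOn ℝ 2 (radialOp n k q σ a φ) (Ioo 0 1) := by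
  rw [show (2 : WithTop ℕ∞) = 1 + 1 from rfl, contDiffOn_succ_iff_deriv_of_isOpen isOpen_Ioo,
    deriv_radialOp hk hn hσ hq ha.le hφ]
  exact ⟨(contDiff_radialOp hk hn hσ hq ha.le hφ).contDiffOn.differentiableOn one_ne_zero, by simp,
    contDiffOn_slope hn hσ hq ha hφ hc⟩

lemma radialOp_one : radialOp n k q σ a φ 1 = 0 :=
  intervalIntegral.integral_same

lemma radialOp_eq_neg_integral (r : ℝ) :
    radialOp n k q σ a φ r = -∫ s in r..1, slope n k q σ a φ s :=
  intervalIntegral.integral_symm _ _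

lemma radialOp_nonpos (ha : 0 ≤ a) (hφ : IsAdmissible φ) {r : ℝ} (hr : r ≤ 1) :
    radialOp n k q σ a φ r ≤ 0 := by
  rw [radialOp_eq_neg_integral, neg_nonpos]
  exact intervalIntegral.integral_nonneg hr fun s hs => slope_nonneg ha hφ hs.2

lemma radialOp_neg (hk : 1 ≤ k) (hn : 1 ≤ n) (hσ : 0 ≤ σ) (hq : 0 ≤ q) (ha : 0 < a)
    (hφ : IsAdmissible φ) {r : ℝ} (hr : r ∈ Ioo (0:ℝ) 1) : radialOp n k q σ a φ r < 0 := by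
  rw [radialOp_eq_neg_integral, neg_lt_zero]
  exact intervalIntegral.intervalIntegral_pos_of_pos_on
    ((continuous_slope hk hn hσ hq ha.le hφ).intervalIntegrable r 1)
    (fun s hs => slope_pos hn hσ hq ha hφ ⟨hr.1.trans hs.1, hs.2.le⟩) hr.2

lemma IsAdmissible.radialOp (hk : 1 ≤ k) (hn : 1 ≤ n) (hσ : 0 ≤ σ) (hq : 0 ≤ q) (ha : 0 ≤ a)
    (hφ : IsAdmissible φ) : IsAdmissible (radialOp n k q σ a φ) :=
  .of_continuous (continuous_radialOp hk hn hσ hq ha hφ) fun _ ht => radialOp_nonpos ha hφ ht.2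

lemma radialOp_mono (hk : 1 ≤ k) (hn : 1 ≤ n) (hσ : 0 ≤ σ) (hq : 0 ≤ q) (ha : 0 ≤ a)
    (hφ : IsAdmissible φ) (hψ : IsAdmissible ψ) (hle : ∀ t ∈ Icc (0:ℝ) 1, φ t ≤ ψ t) {r : ℝ}
    (hr : r ∈ Icc (0:ℝ) 1) : radialOp n k q σ a φ r ≤ radialOp n k q σ a ψ r := by
  rw [radialOp_eq_neg_integral, radialOp_eq_neg_integral, neg_le_neg_iff]
  exact intervalIntegral.integral_mono_on hr.2
    ((continuous_slope hk hn hσ hq ha hψ).intervalIntegrable r 1)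
    ((continuous_slope hk hn hσ hq ha hφ).intervalIntegrable r 1)
    fun s hs => slope_anti hn hσ hq ha hφ hψ hle ⟨hr.1.trans hs.1, hs.2⟩

/-- On `(0,1)`, `s^{n-i} slope^i = s^α flux^β` with `β = i/k` and
`α = (n-i)(1-β) + (k-i)β ≥ 0`: a product of nonnegative increasing functions. -/
lemma monotoneOn_rpow_mul_slope_pow (hk : 1 ≤ k) (hkn : k ≤ n) (hn : 1 ≤ n) (hσ : 0 ≤ σ)
    (hq : 0 ≤ q) (ha : 0 ≤ a) (hφ : IsAdmissible φ) {i : ℕ} (hik : i ≤ k) :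
    MonotoneOn (fun s => s ^ ((n : ℝ) - i) * slope n k q σ a φ s ^ i) (Ioo 0 1) := by
  have hk' : (0 : ℝ) < k := by exact_mod_cast hk
  have hik' : (i : ℝ) ≤ k := by exact_mod_cast hik
  have hkn' : (k : ℝ) ≤ n := by exact_mod_cast hkn
  set β : ℝ := i / k with hβ_def
  set α : ℝ := (n - i) + (k - n) * β with hα_def
  have hβ : 0 ≤ β := by positivity
  have hβ1 : β ≤ 1 := div_le_one_of_le₀ hik' hk'.le
  have hα : 0 ≤ α := by
    have : α = (n - i) * (1 - β) + (k - i) * β := by rw [hα_def, hβ_def]; field_simp; ring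
    rw [this]
    exact add_nonneg (mul_nonneg (by linarith) (by linarith)) (mul_nonneg (by linarith) hβ)
  have heq : EqOn (fun s => s ^ α * flux n q σ a φ s ^ β)
      (fun s => s ^ ((n : ℝ) - i) * slope n k q σ a φ s ^ i) (Ioo 0 1) := by
    intro s hs
    have hF := flux_nonneg (n := n) (q := q) (σ := σ) ha hφ ⟨hs.1.le, hs.2.le⟩
    simp only
    rw [slope_of_pos hs.1, ← rpow_natCast, ← rpow_mul (mul_nonneg (rpow_nonneg hs.1.le _) hF),
      mul_rpow (rpow_nonneg hs.1.le _) hF, ← rpow_mul hs.1.le, ← mul_assoc, ← rpow_add hs.1,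
      show (k : ℝ)⁻¹ * i = β by rw [hβ_def]; ring]
  refine MonotoneOn.congr ?_ heq
  refine ((monotoneOn_rpow_Ici_of_exponent_nonneg hα).mono fun s hs => mem_Ici.2 hs.1.le).mul
    ?_ (fun s hs => rpow_nonneg hs.1.le _) (fun s hs => rpow_nonneg
      (flux_nonneg ha hφ ⟨hs.1.le, hs.2.le⟩) _)
  intro x hx y hy hxy
  exact rpow_le_rpow (flux_nonneg ha hφ ⟨hx.1.le, hx.2.le⟩)
    (flux_monotoneOn hn hσ hq ha hφ ⟨hx.1.le, hx.2.le⟩ ⟨hy.1.le, hy.2.le⟩ hxy) hβ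

lemma deriv_rpow_mul_slope_pow (hk : 1 ≤ k) (hn : 1 ≤ n) (hσ : 0 ≤ σ) (hq : 0 ≤ q) (ha : 0 ≤ a)
    (hφ : IsAdmissible φ) {r : ℝ} (hr : r ∈ Ioo (0:ℝ) 1) (hc : ContinuousAt φ r) :
    deriv (fun s => s ^ ((n : ℝ) - k) * slope n k q σ a φ s ^ k) r = source n q σ a φ r := by
  have heq : (fun s => s ^ ((n : ℝ) - k) * slope n k q σ a φ s ^ k) =ᶠ[𝓝 r] flux n q σ a φ :=
    eventually_of_mem (Ioo_mem_nhds hr.1 hr.2) fun s hs =>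
      rpow_mul_slope_pow hk ha hφ ⟨hs.1, hs.2.le⟩
  rw [heq.deriv_eq]
  exact (hasDerivAt_flux hn hσ hq hφ hc).deriv

end Operator

lemma cnk_pos {n k : ℕ} (hk : 1 ≤ k) (hkn : k ≤ n) : 0 < cnk n k :=
  div_pos (Nat.cast_pos.2 (Nat.choose_pos hkn)) (Nat.cast_pos.2 (by omega))

section Solutions

variable {n k : ℕ} {q σ lam : ℝ} {φ : ℝ → ℝ}

lemma isRadialSol_radialOp (hk : 1 ≤ k) (hkn : k ≤ n) (hσ : 0 ≤ σ) (hq : 0 ≤ q) (hlam : 0 < lam)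
    (hφ : IsAdmissible φ)
    (hfix : ∀ r ∈ Icc (0:ℝ) 1, radialOp n k q σ (lam / cnk n k) φ r = φ r) :
    IsRadialSol n k q σ lam (radialOp n k q σ (lam / cnk n k) φ) := by
  have hn : 1 ≤ n := hk.trans hkn
  have hc := cnk_pos hk hkn
  have ha : 0 < lam / cnk n k := div_pos hlam hc
  have hφc : ContinuousOn φ (Ioo 0 1) :=
    ((continuous_radialOp hk hn hσ hq ha.le hφ).continuousOn.congr fun r hr =>
      (hfix r (Ioo_subset_Icc_self hr)).symm)
  have hderiv := deriv_radialOp (n := n) (q := q) (σ := σ) hk hn hσ hq ha.le hφ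
  refine ⟨contDiffOn_radialOp hk hn hσ hq ha hφ hφc,
    (contDiff_radialOp hk hn hσ hq ha.le hφ).contDiffOn, by rw [hderiv, slope_of_nonpos le_rfl],
    radialOp_one, fun r hr => radialOp_neg hk hn hσ hq ha hφ hr, ?_, ?_⟩
  · intro i _ hik r hr
    rw [hderiv]
    exact MonotoneOn.deriv_nonneg_of_isOpen
      (monotoneOn_rpow_mul_slope_pow hk hkn hn hσ hq ha.le hφ hik) isOpen_Ioo hr
  · intro r hr
    rw [hderiv, deriv_rpow_mul_slope_pow hk hn hσ hq ha.le hφ hr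
      (hφc.continuousAt (isOpen_Ioo.mem_nhds hr)), source, ← hfix r (Ioo_subset_Icc_self hr)]
    have hr1 : r ^ (1 - (n : ℝ)) * r ^ ((n : ℝ) - 1 + σ) = r ^ σ := by
      rw [← rpow_add hr.1]; ring_nf
    field_simp
    rw [← hr1]
    ring

end Solutions

section Convergence

variable {n k : ℕ} {q σ a C : ℝ} {φ : ℝ → ℝ} {φs : ℕ → ℝ → ℝ}

lemma tendsto_flux (hn : 1 ≤ n) (hσ : 0 ≤ σ) (hq : 0 ≤ q) (hφs : ∀ m, IsAdmissible (φs m))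
    (hC : ∀ m, ∀ t ∈ Icc (0:ℝ) 1, |φs m t| ≤ C)
    (hlim : ∀ t ∈ Icc (0:ℝ) 1, Tendsto (fun m => φs m t) atTop (𝓝 (φ t)))
    {s : ℝ} (hs : s ∈ Icc (0:ℝ) 1) :
    Tendsto (fun m => flux n q σ a (φs m) s) atTop (𝓝 (flux n q σ a φ s)) := by
  have hmem : ∀ t ∈ uIoc 0 s, t ∈ Icc (0:ℝ) 1 := fun t ht => by
    rw [uIoc_of_le hs.1] at ht
    exact ⟨ht.1.le, ht.2.trans hs.2⟩
  refine intervalIntegral.tendsto_integral_filter_of_dominated_convergence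
    (fun _ => |a| * 1 ^ ((n : ℝ) - 1 + σ) * (1 + C) ^ q)
    (Eventually.of_forall fun m => (measurable_source (hφs m).1).aestronglyMeasurable)
    (Eventually.of_forall fun m => Eventually.of_forall fun t ht => ?_)
    intervalIntegrable_const (Eventually.of_forall fun t ht => ?_)
  · have ht' := hmem t ht
    exact abs_source_le hn hσ hq (by rw [abs_of_nonneg ht'.1]; exact ht'.2) (hC m t ht')
  · exact tendsto_const_nhds.mul
      (((continuousAt_const.sub continuousAt_id).rpow_const (Or.inr hq)).tendsto.comp
        (hlim t (hmem t ht)))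

lemma tendsto_slope (hn : 1 ≤ n) (hσ : 0 ≤ σ) (hq : 0 ≤ q) (hφs : ∀ m, IsAdmissible (φs m))
    (hC : ∀ m, ∀ t ∈ Icc (0:ℝ) 1, |φs m t| ≤ C)
    (hlim : ∀ t ∈ Icc (0:ℝ) 1, Tendsto (fun m => φs m t) atTop (𝓝 (φ t)))
    {s : ℝ} (hs : s ∈ Icc (0:ℝ) 1) :
    Tendsto (fun m => slope n k q σ a (φs m) s) atTop (𝓝 (slope n k q σ a φ s)) := by
  rcases hs.1.eq_or_lt with h0 | h0
  · simp only [slope_of_nonpos h0.ge, tendsto_const_nhds]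
  simp only [slope_of_pos h0]
  exact ((continuous_rpow_const (by positivity)).tendsto _).comp
    (tendsto_const_nhds.mul (tendsto_flux hn hσ hq hφs hC hlim hs))

lemma tendsto_radialOp (hk : 1 ≤ k) (hn : 1 ≤ n) (hσ : 0 ≤ σ) (hq : 0 ≤ q) (ha : 0 ≤ a)
    (hφs : ∀ m, IsAdmissible (φs m)) (hC : ∀ m, ∀ t ∈ Icc (0:ℝ) 1, |φs m t| ≤ C)
    (hlim : ∀ t ∈ Icc (0:ℝ) 1, Tendsto (fun m => φs m t) atTop (𝓝 (φ t)))
    {r : ℝ} (hr : r ∈ Icc (0:ℝ) 1) :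
    Tendsto (fun m => radialOp n k q σ a (φs m) r) atTop (𝓝 (radialOp n k q σ a φ r)) := by
  have hmem : ∀ s ∈ uIoc 1 r, s ∈ Icc (0:ℝ) 1 := fun s hs => by
    rw [uIoc_comm, uIoc_of_le hr.2] at hs
    exact ⟨hr.1.trans hs.1.le, hs.2⟩
  refine intervalIntegral.tendsto_integral_filter_of_dominated_convergence
    (fun _ => (a * (1 + C) ^ q / (n + σ) * 1) ^ (k : ℝ)⁻¹)
    (Eventually.of_forall fun m =>
      (continuous_slope hk hn hσ hq ha (hφs m)).aestronglyMeasurable)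
    (Eventually.of_forall fun m => Eventually.of_forall fun s hs => ?_)
    intervalIntegrable_const
    (Eventually.of_forall fun s hs => tendsto_slope hn hσ hq hφs hC hlim (hmem s hs))
  have hs := hmem s hs
  have hC0 : 0 ≤ C := (abs_nonneg _).trans (hC m 0 (left_mem_Icc.2 zero_le_one))
  rw [norm_eq_abs, abs_of_nonneg (slope_nonneg ha (hφs m) hs.2)]
  refine (slope_le hn hσ hq ha (hφs m) (hC m) hs).trans (rpow_le_rpow ?_ ?_ (by positivity))
  · exact mul_nonneg (by positivity) (rpow_nonneg hs.1 _)
  · exact mul_le_mul_of_nonneg_left (rpow_le_one hs.1 hs.2 (by positivity)) (by positivity)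

end Convergence

section Iteration

variable {n k : ℕ} {q σ a C : ℝ}

def radialIter (n k : ℕ) (q σ a : ℝ) (m : ℕ) : ℝ → ℝ :=
  (radialOp n k q σ a)^[m] 0

lemma radialIter_succ (m : ℕ) :
    radialIter n k q σ a (m + 1) = radialOp n k q σ a (radialIter n k q σ a m) :=
  Function.iterate_succ_apply' _ _ _

lemma isAdmissible_radialIter (hk : 1 ≤ k) (hn : 1 ≤ n) (hσ : 0 ≤ σ) (hq : 0 ≤ q) (ha : 0 ≤ a)
    (m : ℕ) : IsAdmissible (radialIter n k q σ a m) := by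
  induction m with
  | zero => exact .of_continuous continuous_const fun _ _ => le_rfl
  | succ m ih => rw [radialIter_succ]; exact ih.radialOp hk hn hσ hq ha

lemma radialIter_succ_le (hk : 1 ≤ k) (hn : 1 ≤ n) (hσ : 0 ≤ σ) (hq : 0 ≤ q) (ha : 0 ≤ a)
    (m : ℕ) {r : ℝ} (hr : r ∈ Icc (0:ℝ) 1) :
    radialIter n k q σ a (m + 1) r ≤ radialIter n k q σ a m r := by
  induction m generalizing r with
  | zero =>
    rw [radialIter_succ]
    exact radialOp_nonpos ha (isAdmissible_radialIter hk hn hσ hq ha 0) hr.2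
  | succ m ih =>
    have h := radialOp_mono hk hn hσ hq ha (isAdmissible_radialIter hk hn hσ hq ha _)
      (isAdmissible_radialIter hk hn hσ hq ha _) (fun t ht => ih ht) hr
    rwa [← radialIter_succ, ← radialIter_succ] at h

def radialLimit (n k : ℕ) (q σ a : ℝ) (r : ℝ) : ℝ :=
  if r ∈ Icc (0:ℝ) 1 then ⨅ m, radialIter n k q σ a m r else 0

lemma tendsto_radialIter (hk : 1 ≤ k) (hn : 1 ≤ n) (hσ : 0 ≤ σ) (hq : 0 ≤ q) (ha : 0 ≤ a)
    (hb : ∀ m, ∀ t ∈ Icc (0:ℝ) 1, -C ≤ radialIter n k q σ a m t) {r : ℝ} (hr : r ∈ Icc (0:ℝ) 1) :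
    Tendsto (fun m => radialIter n k q σ a m r) atTop (𝓝 (radialLimit n k q σ a r)) := by
  rw [radialLimit, if_pos hr]
  exact tendsto_atTop_ciInf
    (antitone_nat_of_succ_le fun m => radialIter_succ_le hk hn hσ hq ha m hr)
    ⟨-C, forall_mem_range.2 fun m => hb m r hr⟩

lemma radialLimit_mem_Icc (hk : 1 ≤ k) (hn : 1 ≤ n) (hσ : 0 ≤ σ) (hq : 0 ≤ q) (ha : 0 ≤ a)
    (hb : ∀ m, ∀ t ∈ Icc (0:ℝ) 1, -C ≤ radialIter n k q σ a m t) {t : ℝ} (ht : t ∈ Icc (0:ℝ) 1) :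
    radialLimit n k q σ a t ∈ Icc (-C) 0 :=
  isClosed_Icc.mem_of_tendsto (tendsto_radialIter hk hn hσ hq ha hb ht) (Eventually.of_forall
    fun m => ⟨hb m t ht, (isAdmissible_radialIter hk hn hσ hq ha m).2.1 t ht⟩)

lemma isAdmissible_radialLimit (hk : 1 ≤ k) (hn : 1 ≤ n) (hσ : 0 ≤ σ) (hq : 0 ≤ q) (ha : 0 ≤ a)
    (hb : ∀ m, ∀ t ∈ Icc (0:ℝ) 1, -C ≤ radialIter n k q σ a m t) :
    IsAdmissible (radialLimit n k q σ a) := by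
  have hmem := fun t (ht : t ∈ Icc (0:ℝ) 1) => radialLimit_mem_Icc hk hn hσ hq ha hb ht
  refine ⟨Measurable.ite measurableSet_Icc (Measurable.iInf fun m =>
    (isAdmissible_radialIter hk hn hσ hq ha m).1) measurable_const, fun t ht => (hmem t ht).2,
    fun _ => ⟨C, fun t _ => ?_⟩⟩
  by_cases ht : t ∈ Icc (0:ℝ) 1
  · exact abs_le.2 ⟨(hmem t ht).1, (hmem t ht).2.trans (by linarith [(hmem t ht).1, (hmem t ht).2])⟩
  · rw [radialLimit, if_neg ht, abs_zero]
    linarith [(hmem 0 (left_mem_Icc.2 zero_le_one)).1, (hmem 0 (left_mem_Icc.2 zero_le_one)).2]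

lemma radialOp_radialLimit (hk : 1 ≤ k) (hn : 1 ≤ n) (hσ : 0 ≤ σ) (hq : 0 ≤ q) (ha : 0 ≤ a)
    (hb : ∀ m, ∀ t ∈ Icc (0:ℝ) 1, -C ≤ radialIter n k q σ a m t) {r : ℝ} (hr : r ∈ Icc (0:ℝ) 1) :
    radialOp n k q σ a (radialLimit n k q σ a) r = radialLimit n k q σ a r := by
  have hbound : ∀ m, ∀ t ∈ Icc (0:ℝ) 1, |radialIter n k q σ a m t| ≤ C := fun m t ht =>
    abs_le.2 ⟨hb m t ht, ((isAdmissible_radialIter hk hn hσ hq ha m).2.1 t ht).trans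
      (by linarith [hb m t ht, (isAdmissible_radialIter hk hn hσ hq ha m).2.1 t ht])⟩
  refine tendsto_nhds_unique ?_ ((tendsto_radialIter hk hn hσ hq ha hb hr).comp
    (tendsto_add_atTop_nat 1))
  simp only [Function.comp_def, radialIter_succ]
  exact tendsto_radialOp hk hn hσ hq ha (isAdmissible_radialIter hk hn hσ hq ha) hbound
    (fun t ht => tendsto_radialIter hk hn hσ hq ha hb ht) hr

end Iteration

def clampIcc (v : ℝ → ℝ) : ℝ → ℝ := IccExtend zero_le_one ((Icc (0:ℝ) 1).domRestrict v)

lemma clampIcc_of_mem (v : ℝ → ℝ) {t : ℝ} (ht : t ∈ Icc (0:ℝ) 1) : clampIcc v t = v t :=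
  IccExtend_of_mem _ _ ht

lemma continuous_clampIcc {v : ℝ → ℝ} (hv : ContinuousOn v (Icc 0 1)) :
    Continuous (clampIcc v) :=
  hv.domRestrict.Icc_extend'

section Subsolutions

variable {n k : ℕ} {q σ lam : ℝ} {v φ : ℝ → ℝ}

lemma _root_.IsRadialSubsol.contDiffOn_deriv (hv : IsRadialSubsol n k q σ lam v) :
    ContDiffOn ℝ 1 (deriv v) (Ioo 0 1) :=
  have h : ContDiffOn ℝ (1 + 1) v (Ioo 0 1) := hv.1
  ((contDiffOn_succ_iff_deriv_of_isOpen (𝕜 := ℝ) (F := ℝ) isOpen_Ioo).1 h).2.2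

lemma _root_.IsRadialSubsol.exists_abs_deriv_le (hv : IsRadialSubsol n k q σ lam v) :
    ∃ C, ∀ x ∈ Ioo (0:ℝ) 1, |deriv v x| ≤ C := by
  obtain ⟨C, hC⟩ := isCompact_Icc.exists_bound_of_continuousOn
    (hv.2.1.continuousOn_derivWithin (uniqueDiffOn_Icc zero_lt_one) le_rfl)
  refine ⟨C, fun x hx => ?_⟩
  rw [← derivWithin_of_mem_nhds (Icc_mem_nhds hx.1 hx.2)]
  simpa using hC x (Ioo_subset_Icc_self hx)

lemma _root_.IsRadialSubsol.differentiableOn_rpow_mul_deriv_pow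
    (hv : IsRadialSubsol n k q σ lam v) (p : ℝ) (i : ℕ) :
    DifferentiableOn ℝ (fun s => s ^ p * deriv v s ^ i) (Ioo 0 1) := fun x hx =>
  ((differentiableAt_id.rpow_const (Or.inl hx.1.ne')).differentiableWithinAt).mul
    ((hv.contDiffOn_deriv.differentiableOn one_ne_zero x hx).pow i)

lemma _root_.IsRadialSubsol.monotoneOn_rpow_mul_deriv_pow (hv : IsRadialSubsol n k q σ lam v)
    {i : ℕ} (hi : 1 ≤ i) (hik : i ≤ k) :
    MonotoneOn (fun s => s ^ ((n : ℝ) - i) * deriv v s ^ i) (Ioo 0 1) := by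
  have hd := hv.differentiableOn_rpow_mul_deriv_pow ((n : ℝ) - i) i
  refine monotoneOn_of_deriv_nonneg (convex_Ioo 0 1) hd.continuousOn ?_ ?_ <;> rw [interior_Ioo]
  exacts [hd, hv.2.2.1 i hi hik]

lemma _root_.IsRadialSubsol.deriv_nonneg (hk : 1 ≤ k) (hn : 1 < n)
    (hv : IsRadialSubsol n k q σ lam v) {s : ℝ} (hs : s ∈ Ioo (0:ℝ) 1) : 0 ≤ deriv v s := by
  obtain ⟨C, hC⟩ := hv.exists_abs_deriv_le
  have hn' : (0 : ℝ) < (n : ℝ) - (1 : ℕ) := by push_cast; exact sub_pos.2 (by exact_mod_cast hn)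
  have h := nonneg_of_monotoneOn_of_tendsto_zero (hv.monotoneOn_rpow_mul_deriv_pow le_rfl hk)
    (tendsto_rpow_mul_of_bounded hn' fun x hx => by simpa using hC x hx) hs
  simpa using (mul_nonneg_iff_of_pos_left (rpow_pos_of_pos hs.1 _)).1 h

lemma _root_.IsRadialSubsol.monotoneOn (hk : 1 ≤ k) (hn : 1 < n)
    (hv : IsRadialSubsol n k q σ lam v) : MonotoneOn v (Icc 0 1) :=
  monotoneOn_of_deriv_nonneg (convex_Icc 0 1) hv.2.1.continuousOn
    (by rw [interior_Icc]; exact hv.1.differentiableOn two_ne_zero)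
    (by rw [interior_Icc]; exact fun _ hs => hv.deriv_nonneg hk hn hs)

lemma _root_.IsRadialSubsol.nonpos (hk : 1 ≤ k) (hn : 1 < n) (hv : IsRadialSubsol n k q σ lam v)
    {t : ℝ} (ht : t ∈ Icc (0:ℝ) 1) : v t ≤ 0 :=
  (hv.monotoneOn hk hn ht (right_mem_Icc.2 zero_le_one) ht.2).trans hv.2.2.2.2

lemma _root_.IsRadialSubsol.isAdmissible_clampIcc (hk : 1 ≤ k) (hn : 1 < n)
    (hv : IsRadialSubsol n k q σ lam v) : IsAdmissible (clampIcc v) :=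
  .of_continuous (continuous_clampIcc hv.2.1.continuousOn) fun _ ht =>
    clampIcc_of_mem v ht ▸ hv.nonpos hk hn ht

/-- The differential inequality of a subsolution, multiplied by `r^{n-1} / c_{n,k}`. -/
lemma _root_.IsRadialSubsol.source_le_deriv (hk : 1 ≤ k) (hkn : k ≤ n)
    (hv : IsRadialSubsol n k q σ lam v) {r : ℝ} (hr : r ∈ Ioo (0:ℝ) 1) :
    source n q σ (lam / cnk n k) (clampIcc v) r ≤
      deriv (fun s => s ^ ((n : ℝ) - k) * deriv v s ^ k) r := by
  have hc := cnk_pos hk hkn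
  have hpow : r ^ (1 - (n : ℝ)) * r ^ ((n : ℝ) - 1) = 1 := by
    rw [← rpow_add hr.1]; norm_num
  have hσ : r ^ σ * r ^ ((n : ℝ) - 1) = r ^ ((n : ℝ) - 1 + σ) := by
    rw [← rpow_add hr.1]; ring_nf
  have h := mul_le_mul_of_nonneg_right (hv.2.2.2.1 r hr) (rpow_nonneg hr.1.le ((n : ℝ) - 1))
  rw [source, clampIcc_of_mem v (Ioo_subset_Icc_self hr), div_mul_eq_mul_div, div_mul_eq_mul_div,
    div_le_iff₀ hc, ← hσ]
  calc lam * (r ^ σ * r ^ ((n : ℝ) - 1)) * (1 - v r) ^ q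
      = lam * r ^ σ * (1 - v r) ^ q * r ^ ((n : ℝ) - 1) := by ring
    _ ≤ _ := h
    _ = _ := by rw [mul_comm _ (cnk n k)]; linear_combination (cnk n k *
          deriv (fun s => s ^ ((n : ℝ) - k) * deriv v s ^ k) r) * hpow

/-- `s^{n-k} (v')^k - flux` is increasing on `(0,1)` and tends to `0` at `0⁺`. -/
lemma _root_.IsRadialSubsol.flux_le (hk : 1 ≤ k) (hkn : k < n) (hσ : 0 ≤ σ) (hq : 0 ≤ q)
    (hv : IsRadialSubsol n k q σ lam v) {s : ℝ} (hs : s ∈ Ioo (0:ℝ) 1) :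
    flux n q σ (lam / cnk n k) (clampIcc v) s ≤ s ^ ((n : ℝ) - k) * deriv v s ^ k := by
  have hn : 1 ≤ n := by omega
  have hadm := hv.isAdmissible_clampIcc hk (by omega)
  have hflux : ∀ x ∈ Ioo (0:ℝ) 1, HasDerivAt (flux n q σ (lam / cnk n k) (clampIcc v))
      (source n q σ (lam / cnk n k) (clampIcc v) x) x := fun x _ =>
    hasDerivAt_flux hn hσ hq hadm (continuous_clampIcc hv.2.1.continuousOn).continuousAt
  set D := fun s => s ^ ((n : ℝ) - k) * deriv v s ^ k - flux n q σ (lam / cnk n k) (clampIcc v) s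
  have hdiff : DifferentiableOn ℝ D (Ioo 0 1) := fun x hx =>
    (hv.differentiableOn_rpow_mul_deriv_pow _ k x hx).sub
      (hflux x hx).differentiableAt.differentiableWithinAt
  have hmono : MonotoneOn D (Ioo 0 1) := by
    refine monotoneOn_of_deriv_nonneg (convex_Ioo 0 1) hdiff.continuousOn (by rwa [interior_Ioo]) ?_
    rw [interior_Ioo]
    intro x hx
    rw [deriv_fun_sub ((hv.differentiableOn_rpow_mul_deriv_pow _ k).differentiableAt
      (isOpen_Ioo.mem_nhds hx)) (hflux x hx).differentiableAt, (hflux x hx).deriv, sub_nonneg]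
    exact hv.source_le_deriv hk hkn.le hx
  have hlim : Tendsto D (𝓝[>] 0) (𝓝 0) := by
    obtain ⟨C, hC⟩ := hv.exists_abs_deriv_le
    have hF := tendsto_rpow_mul_of_bounded (p := (n : ℝ) - k) (g := fun s => deriv v s ^ k)
      (sub_pos.2 (by exact_mod_cast hkn)) fun x hx => by
        rw [abs_pow]; exact pow_le_pow_left₀ (abs_nonneg _) (hC x hx) k
    have hI := ((continuous_flux (a := lam / cnk n k) hn hσ hq hadm).tendsto 0).mono_left
      (nhdsWithin_le_nhds (s := Ioi 0))
    simpa [D, flux] using hF.sub hI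
  exact sub_nonneg.1 (nonneg_of_monotoneOn_of_tendsto_zero hmono hlim hs)

/-- The derivative of `v` dominates `slope φ`, and `v 1 ≤ 0 = radialOp φ 1`. -/
lemma _root_.IsRadialSubsol.le_radialOp (hk : 1 ≤ k) (hkn : k < n) (hσ : 0 ≤ σ) (hq : 0 ≤ q)
    (hlam : 0 < lam) (hv : IsRadialSubsol n k q σ lam v) (hφ : IsAdmissible φ)
    (hle : ∀ t ∈ Icc (0:ℝ) 1, v t ≤ φ t) {r : ℝ} (hr : r ∈ Icc (0:ℝ) 1) :
    v r ≤ radialOp n k q σ (lam / cnk n k) φ r := by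
  have hn : 1 ≤ n := by omega
  have hk0 : k ≠ 0 := by omega
  have hn1 : 1 < n := by omega
  have ha : 0 < lam / cnk n k := div_pos hlam (cnk_pos hk hkn.le)
  have hslope : ∀ s ∈ Ioo (0:ℝ) 1, slope n k q σ (lam / cnk n k) φ s ≤ deriv v s := by
    intro s hs
    refine le_of_pow_le_pow_left₀ hk0 (hv.deriv_nonneg hk hn1 hs)
      (le_of_mul_le_mul_left ?_ (rpow_pos_of_pos hs.1 ((n : ℝ) - k)))
    rw [rpow_mul_slope_pow hk ha.le hφ ⟨hs.1, hs.2.le⟩]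
    refine (flux_anti hn hσ hq ha.le (hv.isAdmissible_clampIcc hk hn1) hφ
      (fun t ht => clampIcc_of_mem v ht ▸ hle t ht) (Ioo_subset_Icc_self hs)).trans ?_
    exact hv.flux_le hk hkn hσ hq hs
  have hdiff : DifferentiableOn ℝ (fun r => v r - radialOp n k q σ (lam / cnk n k) φ r)
      (Ioo 0 1) := (hv.1.differentiableOn two_ne_zero).sub fun x _ =>
    (hasDerivAt_radialOp hk hn hσ hq ha.le hφ x).differentiableAt.differentiableWithinAt
  have hmono : MonotoneOn (fun r => v r - radialOp n k q σ (lam / cnk n k) φ r) (Icc 0 1) := by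
    refine monotoneOn_of_deriv_nonneg (convex_Icc 0 1)
      (hv.2.1.continuousOn.sub (continuous_radialOp hk hn hσ hq ha.le hφ).continuousOn)
      (by rwa [interior_Icc]) ?_
    rw [interior_Icc]
    intro x hx
    rw [deriv_fun_sub (hv.1.differentiableOn two_ne_zero |>.differentiableAt
      (isOpen_Ioo.mem_nhds hx)) (hasDerivAt_radialOp hk hn hσ hq ha.le hφ x).differentiableAt,
      (hasDerivAt_radialOp hk hn hσ hq ha.le hφ x).deriv, sub_nonneg]
    exact hslope x hx
  have h1 := hmono hr (right_mem_Icc.2 zero_le_one) hr.2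
  simp only [radialOp_one, sub_zero] at h1
  linarith [hv.2.2.2.2]

lemma _root_.IsRadialSol.isRadialSubsol {lam' : ℝ} {u : ℝ → ℝ}
    (hu : IsRadialSol n k q σ lam' u) (hlam : lam ≤ lam') : IsRadialSubsol n k q σ lam u := by
  obtain ⟨hc2, hc1, -, hu1, hneg, hmono, heq⟩ := hu
  refine ⟨hc2, hc1, hmono, fun r hr => ?_, hu1.le⟩
  rw [heq r hr]
  exact mul_le_mul_of_nonneg_right (mul_le_mul_of_nonneg_right hlam (rpow_nonneg hr.1.le _))
    (rpow_nonneg (by linarith [hneg r hr]) _)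

lemma _root_.IsRadialSubsol.le_radialIter (hk : 1 ≤ k) (hkn : k < n) (hσ : 0 ≤ σ) (hq : 0 ≤ q)
    (hlam : 0 < lam) (hv : IsRadialSubsol n k q σ lam v) (m : ℕ) {r : ℝ}
    (hr : r ∈ Icc (0:ℝ) 1) : v r ≤ radialIter n k q σ (lam / cnk n k) m r := by
  induction m generalizing r with
  | zero => exact hv.nonpos hk (by omega) hr
  | succ m ih =>
    rw [radialIter_succ]
    exact hv.le_radialOp hk hkn hσ hq hlam (isAdmissible_radialIter hk (by omega) hσ hq
      (div_pos hlam (cnk_pos hk hkn.le)).le m) (fun t ht => ih ht) hr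

end Subsolutions

theorem exists_maximal_radialSol {n k : ℕ} {q σ lam : ℝ} (hk : 1 ≤ k) (hkn : k < n)
    (hσ : 0 ≤ σ) (hq : 0 ≤ q) (hlam : 0 < lam) {w : ℝ → ℝ} (hw : IsRadialSubsol n k q σ lam w) :
    ∃ u : ℝ → ℝ, IsRadialSol n k q σ lam u ∧
      ∀ v : ℝ → ℝ, IsRadialSubsol n k q σ lam v → ∀ r ∈ Icc (0:ℝ) 1, v r ≤ u r := by
  have hn : 1 ≤ n := by omega
  have ha : 0 ≤ lam / cnk n k := (div_pos hlam (cnk_pos hk hkn.le)).le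
  obtain ⟨C, hC⟩ := isCompact_Icc.exists_bound_of_continuousOn hw.2.1.continuousOn
  have hb : ∀ m, ∀ t ∈ Icc (0:ℝ) 1, -C ≤ radialIter n k q σ (lam / cnk n k) m t :=
    fun m t ht => (neg_le.1 ((neg_le_abs (w t)).trans (by simpa using hC t ht))).trans
      (hw.le_radialIter hk hkn hσ hq hlam m ht)
  refine ⟨radialOp n k q σ (lam / cnk n k) (radialLimit n k q σ (lam / cnk n k)),
    isRadialSol_radialOp hk hkn.le hσ hq hlam (isAdmissible_radialLimit hk hn hσ hq ha hb)
      fun r hr => radialOp_radialLimit hk hn hσ hq ha hb hr,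
    fun v hv r hr => ?_⟩
  rw [radialOp_radialLimit hk hn hσ hq ha hb hr]
  exact ge_of_tendsto (tendsto_radialIter hk hn hσ hq ha hb hr)
    (Eventually.of_forall fun m => hv.le_radialIter hk hkn hσ hq hlam m hr)

end RadialKHessian

theorem maximal_solution_below_general (n k : ℕ) (hk : 1 ≤ k) (hn : 2 * k < n)
    (q σ : ℝ) (hq : (k : ℝ) < q) (hσ : 0 ≤ σ)
    (lam₀ : ℝ) (hex : ∃ w : ℝ → ℝ, IsRadialSol n k q σ lam₀ w) :
    (∀ lam : ℝ, 0 < lam → lam < lam₀ →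
      ∃ u : ℝ → ℝ, IsRadialSol n k q σ lam u ∧
        ∀ v : ℝ → ℝ, IsRadialSubsol n k q σ lam v → ∀ r ∈ Icc (0:ℝ) 1, v r ≤ u r) ∧
    (∀ lam₁ lam₂ : ℝ, 0 < lam₁ → lam₁ < lam₂ → lam₂ < lam₀ →
      ∀ u₁ u₂ : ℝ → ℝ,
        (IsRadialSol n k q σ lam₁ u₁ ∧
          ∀ v : ℝ → ℝ, IsRadialSubsol n k q σ lam₁ v → ∀ r ∈ Icc (0:ℝ) 1, v r ≤ u₁ r) →
        (IsRadialSol n k q σ lam₂ u₂ ∧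
          ∀ v : ℝ → ℝ, IsRadialSubsol n k q σ lam₂ v → ∀ r ∈ Icc (0:ℝ) 1, v r ≤ u₂ r) →
        ∀ r ∈ Icc (0:ℝ) 1, u₂ r ≤ u₁ r) := by
  obtain ⟨w, hw⟩ := hex
  have hq₀ : 0 ≤ q := (Nat.cast_nonneg k).trans hq.le
  refine ⟨fun lam hlam hlt => RadialKHessian.exists_maximal_radialSol hk (by omega) hσ hq₀ hlam
    (hw.isRadialSubsol hlt.le), ?_⟩
  rintro lam₁ lam₂ - h₁₂ - u₁ u₂ ⟨-, hu₁max⟩ ⟨hu₂, -⟩ r hr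
  exact hu₁max u₂ (hu₂.isRadialSubsol h₁₂.le) r hr

/-- if `(P_{λ₀})` has a classical radial solution then for every
`λ ∈ (0,λ₀)` problem `(P_λ)` has a maximal (bounded) classical radial solution, and the
maximal solutions decrease as `λ` increases. -/
theorem maximal_solution_below (n k : ℕ) (hk : 1 ≤ k) (hn : 2 * k < n)
    (q σ : ℝ) (hq : (k : ℝ) < q) (hσ : 0 ≤ σ)
    (lam₀ : ℝ) (hlam₀ : 0 < lam₀) (hex : ∃ w : ℝ → ℝ, IsRadialSol n k q σ lam₀ w) :
    (∀ lam : ℝ, 0 < lam → lam < lam₀ →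
      ∃ u : ℝ → ℝ, IsRadialSol n k q σ lam u ∧
        ∀ v : ℝ → ℝ, IsRadialSubsol n k q σ lam v → ∀ r ∈ Icc (0:ℝ) 1, v r ≤ u r) ∧
    (∀ lam₁ lam₂ : ℝ, 0 < lam₁ → lam₁ < lam₂ → lam₂ < lam₀ →
      ∀ u₁ u₂ : ℝ → ℝ,
        (IsRadialSol n k q σ lam₁ u₁ ∧
          ∀ v : ℝ → ℝ, IsRadialSubsol n k q σ lam₁ v → ∀ r ∈ Icc (0:ℝ) 1, v r ≤ u₁ r) →
        (IsRadialSol n k q σ lam₂ u₂ ∧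
          ∀ v : ℝ → ℝ, IsRadialSubsol n k q σ lam₂ v → ∀ r ∈ Icc (0:ℝ) 1, v r ≤ u₂ r) →
        ∀ r ∈ Icc (0:ℝ) 1, u₂ r ≤ u₁ r) :=
  maximal_solution_below_general n k hk hn q σ hq hσ lam₀ hex
end
end

section
/- Let w ∈ C² be a solution of (r^{n-k}(w'(r))^k)' = c_{n,k}^{-1} λ r^{n-1+σ} (-w(r))^q on an open interval I ⊂ (0,∞), with w < 0 and w' > 0 on I. Define, for t with e^t ∈ I, x(t) = c_{n,k}^{-1} λ e^{(k+σ)t} (-w(e^t))^q / (w'(e^t))^k and y(t) = e^t w'(e^t) / (-w(e^t)). Then (x,y) solves the Lotka–Volterra system (LV): dx/dt = x[n + σ - x - q y] and dy/dt = y[-(n-2k)/k + x/k + y]. -/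
open Real Set Filter MeasureTheory

noncomputable section

/-! The radial equation, expanded by the product rule and divided by `r^{n-k-1} (w')^k` at
`r = e^t`, says `k r w''/w' = x - (n - k)`. The logarithmic derivatives of `x` and `y` are
`k + σ - q y - k r w''/w'` and `1 + r w''/w' + y` for any `w`, so substituting gives (LV). -/

-- The paper's coordinates `x(t)`, `y(t)`, with `C = c_{n,k}⁻¹ λ`.
def lvX (C : ℝ) (k : ℕ) (σ q : ℝ) (w : ℝ → ℝ) (t : ℝ) : ℝ :=
  C * Real.exp (((k : ℝ) + σ) * t) * (-w (Real.exp t)) ^ q / (deriv w (Real.exp t)) ^ k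

def lvY (w : ℝ → ℝ) (t : ℝ) : ℝ :=
  Real.exp t * deriv w (Real.exp t) / (-w (Real.exp t))

lemma natCast_mul_pow_sub_one {K : Type*} [Field K] {x : K} (hx : x ≠ 0) (k : ℕ) :
    (k : K) * x ^ (k - 1) = k * x ^ k / x := by
  rcases Nat.eq_zero_or_pos k with rfl | hk
  · simp
  · rw [← pow_sub_one_mul hk.ne' x]
    field_simp

lemma hasDerivAt_rpow_mul_pow {g : ℝ → ℝ} {g' r : ℝ} (m : ℝ) (k : ℕ) (hr : r ≠ 0)
    (hgr : g r ≠ 0) (hg : HasDerivAt g g' r) :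
    HasDerivAt (fun s => s ^ m * g s ^ k) (r ^ m * g r ^ k * (m / r + k * g' / g r)) r := by
  refine ((Real.hasDerivAt_rpow_const (p := m) (Or.inl hr)).mul (hg.pow k)).congr_deriv ?_
  rw [Pi.pow_apply, Real.rpow_sub_one hr, natCast_mul_pow_sub_one hgr]
  field_simp

section ChangeOfVariables

variable {w : ℝ → ℝ} {n k : ℕ} {C σ q t D : ℝ}

lemma lvX_eq_of_radial_eq (hD : HasDerivAt (deriv w) D (Real.exp t))
    (hV : deriv w (Real.exp t) ≠ 0)
    (heq : deriv (fun s => s ^ ((n : ℝ) - k) * (deriv w s) ^ k) (Real.exp t) =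
      C * Real.exp t ^ ((n : ℝ) - 1 + σ) * (-w (Real.exp t)) ^ q) :
    lvX C k σ q w t = n - k + k * (Real.exp t * D / deriv w (Real.exp t)) := by
  unfold lvX
  set r := Real.exp t
  have hr : 0 < r := Real.exp_pos t
  rw [(hasDerivAt_rpow_mul_pow _ k hr.ne' hV hD).deriv] at heq
  have hsplit : r ^ ((n : ℝ) - 1 + σ) = r ^ ((n : ℝ) - k) * r ^ ((k : ℝ) + σ) / r := by
    rw [← Real.rpow_add hr, ← Real.rpow_sub_one hr.ne']
    ring_nf
  have hexp : Real.exp (((k : ℝ) + σ) * t) = r ^ ((k : ℝ) + σ) := by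
    rw [mul_comm, Real.exp_mul]
  rw [hsplit] at heq
  have hrk : r ^ ((n : ℝ) - k) ≠ 0 := (Real.rpow_pos_of_pos hr _).ne'
  rw [hexp]
  field_simp at heq ⊢
  linear_combination -heq

variable (C k σ q) in
lemma hasDerivAt_lvX (hw : HasDerivAt w (deriv w (Real.exp t)) (Real.exp t))
    (hD : HasDerivAt (deriv w) D (Real.exp t)) (hW : w (Real.exp t) ≠ 0)
    (hV : deriv w (Real.exp t) ≠ 0) :
    HasDerivAt (lvX C k σ q w)
      (lvX C k σ q w t * (k + σ - q * lvY w t - k * (Real.exp t * D / deriv w (Real.exp t)))) t := by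
  have hexp := Real.hasDerivAt_exp t
  have hE : HasDerivAt (fun t => Real.exp (((k : ℝ) + σ) * t))
      (Real.exp (((k : ℝ) + σ) * t) * ((k : ℝ) + σ)) t := by
    simpa using ((hasDerivAt_id t).const_mul ((k : ℝ) + σ)).exp
  have hWt := ((hw.comp t hexp).neg.rpow_const (p := q) (Or.inl (neg_ne_zero.mpr hW)))
  have hVt := (hD.comp t hexp).pow k
  refine (((hE.const_mul C).mul hWt).div hVt (pow_ne_zero k hV)).congr_deriv ?_
  simp only [lvX, lvY, Pi.mul_apply, Pi.neg_apply, Pi.pow_apply, Function.comp_apply]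
  rw [Real.rpow_sub_one (neg_ne_zero.mpr hW), natCast_mul_pow_sub_one hV]
  field_simp
  ring

lemma hasDerivAt_lvY (hw : HasDerivAt w (deriv w (Real.exp t)) (Real.exp t))
    (hD : HasDerivAt (deriv w) D (Real.exp t)) (hW : w (Real.exp t) ≠ 0)
    (hV : deriv w (Real.exp t) ≠ 0) :
    HasDerivAt (lvY w)
      (lvY w t * (1 + Real.exp t * D / deriv w (Real.exp t) + lvY w t)) t := by
  have hexp := Real.hasDerivAt_exp t
  refine ((hexp.mul (hD.comp t hexp)).div (hw.comp t hexp).neg (neg_ne_zero.mpr hW)).congr_deriv ?_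
  simp only [lvY, Pi.mul_apply, Pi.neg_apply, Function.comp_apply]
  field_simp
  ring

end ChangeOfVariables

theorem change_of_variables_LV_general (n k : ℕ) (hk : 1 ≤ k)
    (q σ lam : ℝ)
    (a b : ℝ) (w : ℝ → ℝ)
    (hreg : ContDiffOn ℝ 2 w (Ioo a b))
    (hneg : ∀ r ∈ Ioo a b, w r < 0)
    (hinc : ∀ r ∈ Ioo a b, 0 < deriv w r)
    (heq : ∀ r ∈ Ioo a b,
      deriv (fun s => s ^ ((n : ℝ) - k) * (deriv w s) ^ k) r =
        (cnk n k)⁻¹ * lam * r ^ ((n : ℝ) - 1 + σ) * (-w r) ^ q) :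
    ∀ t : ℝ, Real.exp t ∈ Ioo a b →
      HasDerivAt
        (fun t => (cnk n k)⁻¹ * lam * Real.exp (((k : ℝ) + σ) * t) *
          (-w (Real.exp t)) ^ q / (deriv w (Real.exp t)) ^ k)
        (((cnk n k)⁻¹ * lam * Real.exp (((k : ℝ) + σ) * t) *
            (-w (Real.exp t)) ^ q / (deriv w (Real.exp t)) ^ k) *
          ((n : ℝ) + σ -
            (cnk n k)⁻¹ * lam * Real.exp (((k : ℝ) + σ) * t) *
              (-w (Real.exp t)) ^ q / (deriv w (Real.exp t)) ^ k -
            q * (Real.exp t * deriv w (Real.exp t) / (-w (Real.exp t))))) t ∧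
      HasDerivAt
        (fun t => Real.exp t * deriv w (Real.exp t) / (-w (Real.exp t)))
        ((Real.exp t * deriv w (Real.exp t) / (-w (Real.exp t))) *
          (-(((n : ℝ) - 2 * k) / k) +
            (cnk n k)⁻¹ * lam * Real.exp (((k : ℝ) + σ) * t) *
              (-w (Real.exp t)) ^ q / (deriv w (Real.exp t)) ^ k / k +
            Real.exp t * deriv w (Real.exp t) / (-w (Real.exp t)))) t := by
  intro t ht
  have hnhds : Ioo a b ∈ nhds (Real.exp t) := isOpen_Ioo.mem_nhds ht
  have hw : HasDerivAt w (deriv w (Real.exp t)) (Real.exp t) :=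
    ((hreg.contDiffAt hnhds).differentiableAt (by norm_num)).hasDerivAt
  have hD : HasDerivAt (deriv w) (deriv (deriv w) (Real.exp t)) (Real.exp t) :=
    (((hreg.deriv_of_isOpen (m := 1) isOpen_Ioo (by norm_num)).contDiffAt hnhds).differentiableAt
      (by norm_num)).hasDerivAt
  have hW := (hneg _ ht).ne
  have hV := (hinc _ ht).ne'
  have hk0 : (k : ℝ) ≠ 0 := Nat.cast_ne_zero.mpr (by omega)
  have hrD : Real.exp t * deriv (deriv w) (Real.exp t) / deriv w (Real.exp t) =
      (lvX ((cnk n k)⁻¹ * lam) k σ q w t - (n - k)) / k := by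
    rw [lvX_eq_of_radial_eq hD hV (heq _ ht)]
    field_simp
    ring
  constructor
  · refine (hasDerivAt_lvX _ _ _ _ hw hD hW hV).congr_deriv ?_
    rw [hrD]
    simp only [lvX, lvY]
    field_simp
    ring
  · refine (hasDerivAt_lvY hw hD hW hV).congr_deriv ?_
    rw [hrD]
    simp only [lvX, lvY]
    field_simp
    ring

/-- the change of variables
`x(t) = c_{n,k}⁻¹ λ e^{(k+σ)t}(-w(e^t))^q/(w'(e^t))^k`, `y(t) = e^t w'(e^t)/(-w(e^t))`
transforms a negative increasing solution `w` of
`(r^{n-k}(w')^k)' = c_{n,k}⁻¹ λ r^{n-1+σ}(-w)^q` on an open interval `I ⊂ (0,∞)` into a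
solution of the Lotka–Volterra system (LV). -/
theorem change_of_variables_LV (n k : ℕ) (hk : 1 ≤ k) (hn : 2 * k < n)
    (q σ lam : ℝ) (hq : (k : ℝ) < q) (hσ : 0 ≤ σ) (hlam : 0 < lam)
    (a b : ℝ) (ha : 0 ≤ a) (w : ℝ → ℝ)
    (hreg : ContDiffOn ℝ 2 w (Ioo a b))
    (hneg : ∀ r ∈ Ioo a b, w r < 0)
    (hinc : ∀ r ∈ Ioo a b, 0 < deriv w r)
    (heq : ∀ r ∈ Ioo a b,
      deriv (fun s => s ^ ((n : ℝ) - k) * (deriv w s) ^ k) r =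
        (cnk n k)⁻¹ * lam * r ^ ((n : ℝ) - 1 + σ) * (-w r) ^ q) :
    ∀ t : ℝ, Real.exp t ∈ Ioo a b →
      HasDerivAt
        (fun t => (cnk n k)⁻¹ * lam * Real.exp (((k : ℝ) + σ) * t) *
          (-w (Real.exp t)) ^ q / (deriv w (Real.exp t)) ^ k)
        (((cnk n k)⁻¹ * lam * Real.exp (((k : ℝ) + σ) * t) *
            (-w (Real.exp t)) ^ q / (deriv w (Real.exp t)) ^ k) *
          ((n : ℝ) + σ -
            (cnk n k)⁻¹ * lam * Real.exp (((k : ℝ) + σ) * t) *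
              (-w (Real.exp t)) ^ q / (deriv w (Real.exp t)) ^ k -
            q * (Real.exp t * deriv w (Real.exp t) / (-w (Real.exp t))))) t ∧
      HasDerivAt
        (fun t => Real.exp t * deriv w (Real.exp t) / (-w (Real.exp t)))
        ((Real.exp t * deriv w (Real.exp t) / (-w (Real.exp t))) *
          (-(((n : ℝ) - 2 * k) / k) +
            (cnk n k)⁻¹ * lam * Real.exp (((k : ℝ) + σ) * t) *
              (-w (Real.exp t)) ^ q / (deriv w (Real.exp t)) ^ k / k +
            Real.exp t * deriv w (Real.exp t) / (-w (Real.exp t)))) t :=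
  change_of_variables_LV_general n k hk q σ lam a b w hreg hneg hinc heq
end
end

section
/- Let q = q*(k,σ) and define the vector field F₁(x,y) = x(n + σ - x - q*(k,σ)·y), F₂(x,y) = y(-(n-2k)/k + x/k + y). Then the line ((n-2k)/k)·x + (n+σ)·y = ((n-2k)/k)·(n+σ) is invariant: at every point (x,y) on this line, ((n-2k)/k)·F₁(x,y) + (n+σ)·F₂(x,y) = 0. -/
open Real Set Filter MeasureTheory

noncomputable section

/- The derivative of `ax + by` along the field is `(y - x)(ax + by - ab) + xy(b(c + 1) - a(q + 1))`;
with `a = (n - 2k)/k`, `b = n + σ`, `c = 1/k`, the critical exponent `q*` is exactly the value of `q`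
that kills the cross term. -/
theorem lotkaVolterra_linear_form_deriv {a b c q : ℝ} (h : a * (q + 1) = b * (c + 1)) (x y : ℝ) :
    a * (x * (b - x - q * y)) + b * (y * (-a + c * x + y)) = (y - x) * (a * x + b * y - a * b) := by
  linear_combination -(x * y) * h

theorem div_mul_qstar_add_one {n k : ℕ} (hk : k ≠ 0) (hn : 2 * k < n) (σ : ℝ) :
    ((n : ℝ) - 2 * k) / k * (qstar n k σ + 1) = ((n : ℝ) + σ) * ((k : ℝ)⁻¹ + 1) := by
  have hk' : (k : ℝ) ≠ 0 := Nat.cast_ne_zero.mpr hk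
  have hn' : (n : ℝ) - 2 * k ≠ 0 := by
    have : (2 * k : ℝ) < n := by exact_mod_cast hn
    linarith
  unfold qstar
  field_simp
  ring

theorem invariant_line_general (n k : ℕ) (hk : 1 ≤ k) (hn : 2 * k < n) (σ : ℝ) :
    ∀ x y : ℝ,
      ((n : ℝ) - 2 * k) / k * x + ((n : ℝ) + σ) * y = ((n : ℝ) - 2 * k) / k * ((n : ℝ) + σ) →
      ((n : ℝ) - 2 * k) / k * (x * ((n : ℝ) + σ - x - qstar n k σ * y)) +
          ((n : ℝ) + σ) * (y * (-(((n : ℝ) - 2 * k) / k) + x / k + y)) = 0 := by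
  intro x y hline
  have hfield := lotkaVolterra_linear_form_deriv (div_mul_qstar_add_one (by omega) hn σ) x y
  rw [← div_eq_inv_mul] at hfield
  rw [hfield, hline, sub_self, mul_zero]

/-- for `q = q*(k,σ)` the line `((n-2k)/k)x + (n+σ)y = ((n-2k)/k)(n+σ)`
is invariant for the Lotka–Volterra vector field. -/
theorem invariant_line (n k : ℕ) (hk : 1 ≤ k) (hn : 2 * k < n) (σ : ℝ) (hσ : 0 ≤ σ) :
    ∀ x y : ℝ,
      ((n : ℝ) - 2 * k) / k * x + ((n : ℝ) + σ) * y = ((n : ℝ) - 2 * k) / k * ((n : ℝ) + σ) →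
      ((n : ℝ) - 2 * k) / k * (x * ((n : ℝ) + σ - x - qstar n k σ * y)) +
          ((n : ℝ) + σ) * (y * (-(((n : ℝ) - 2 * k) / k) + x / k + y)) = 0 :=
  invariant_line_general n k hk hn σ
end
end

section
/- Let λ > 0 and c > 0, and define w_c(r) = -λ^{-(n-2k)/((2k+σ)(k+1))} · [c · binom(n,k) · ((n+σ)/n) · ((n-2k)/k)^k]^{(n-2k)/((2k+σ)(k+1))} · (c + r^{(2k+σ)/k})^{-(n-2k)/(2k+σ)}. Then w_c satisfies c_{n,k} r^{1-n} (r^{n-k}(w_c'(r))^k)' = λ r^σ (-w_c(r))^{q*(k,σ)} for every r > 0. -/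
open Real Set Filter MeasureTheory

noncomputable section

/-- The Bliss-type function `w_c`. -/
def wFun (n k : ℕ) (σ lam c : ℝ) : ℝ → ℝ := fun r =>
  -(lam ^ (-(((n : ℝ) - 2 * k) / ((2 * (k : ℝ) + σ) * ((k : ℝ) + 1)))) *
    (c * (n.choose k : ℝ) * (((n : ℝ) + σ) / n) * (((n : ℝ) - 2 * k) / k) ^ k) ^
      (((n : ℝ) - 2 * k) / ((2 * (k : ℝ) + σ) * ((k : ℝ) + 1))) *
    (c + r ^ ((2 * (k : ℝ) + σ) / k)) ^ (-(((n : ℝ) - 2 * k) / (2 * (k : ℝ) + σ))))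

/-!
Write `w_c(r) = -A (c + r^p)^{-m}` with `p = (2k+σ)/k` and `m = (n-2k)/(2k+σ)`. Then
`r^{n-k} (w_c')^k = (A m p)^k r^{n+σ} (c + r^p)^{-(m+1)k}`, and since `(m+1)k p = n+σ` the
two terms of its derivative combine into the single monomial
`(A m p)^k (n+σ) c r^{n+σ-1} (c + r^p)^{-(m+1)k-1}`. The exponent of `c + r^p` here is
`-m q*`, which is exactly what makes the equation close; the amplitude `A` is chosen so
that `λ A^{q*-k}` equals the remaining constant `c_{n,k} (m p)^k (n+σ) c`.
-/

def blissProfile (a c p m : ℝ) : ℝ → ℝ := fun r => -(a * (c + r ^ p) ^ (-m))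

theorem hasDerivAt_blissProfile (a p m : ℝ) {c s : ℝ} (hc : 0 ≤ c) (hs : 0 < s) :
    HasDerivAt (blissProfile a c p m) (a * m * p * s ^ (p - 1) * (c + s ^ p) ^ (-m - 1)) s := by
  have hcs : 0 < c + s ^ p := by positivity
  have hinner : HasDerivAt (fun x : ℝ => c + x ^ p) (p * s ^ (p - 1)) s :=
    (hasDerivAt_rpow_const (Or.inl hs.ne')).const_add c
  refine ((hinner.rpow_const (p := -m) (Or.inl hcs.ne')).const_mul a).neg.congr_deriv ?_
  ring

theorem hasDerivAt_rpow_mul_add_rpow_rpow {β γ c p s : ℝ} (hc : 0 ≤ c) (hs : 0 < s)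
    (hβ : β + γ * p = 0) :
    HasDerivAt (fun x : ℝ => x ^ β * (c + x ^ p) ^ γ)
      (β * c * s ^ (β - 1) * (c + s ^ p) ^ (γ - 1)) s := by
  have hcs : 0 < c + s ^ p := by positivity
  have hinner : HasDerivAt (fun x : ℝ => c + x ^ p) (p * s ^ (p - 1)) s :=
    (hasDerivAt_rpow_const (Or.inl hs.ne')).const_add c
  refine ((hasDerivAt_rpow_const (p := β) (Or.inl hs.ne')).mul
    (hinner.rpow_const (p := γ) (Or.inl hcs.ne'))).congr_deriv ?_
  have hβ' : s ^ β = s ^ (β - 1) * s := by rw [← rpow_add_one hs.ne']; ring_nf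
  have hγ' : (c + s ^ p) ^ γ = (c + s ^ p) ^ (γ - 1) * (c + s ^ p) := by
    rw [← rpow_add_one hcs.ne']; ring_nf
  have hp : s ^ (p - 1) * s = s ^ p := by rw [← rpow_add_one hs.ne']; ring_nf
  rw [hβ', hγ', ← hp]
  linear_combination (s ^ (β - 1) * (c + s ^ (p - 1) * s) ^ (γ - 1) * s * s ^ (p - 1)) * hβ

theorem flux_blissProfile_eq (a p m N : ℝ) (k : ℕ) {c s : ℝ} (hc : 0 ≤ c) (hs : 0 < s) :
    s ^ (N - k) * (deriv (blissProfile a c p m) s) ^ k =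
      (a * m * p) ^ k * (s ^ (N + (p - 2) * k) * (c + s ^ p) ^ (-(m + 1) * k)) := by
  have hcs : 0 < c + s ^ p := by positivity
  rw [(hasDerivAt_blissProfile a p m hc hs).deriv, mul_pow, mul_pow,
    ← rpow_natCast (s ^ (p - 1)), ← rpow_mul hs.le,
    ← rpow_natCast ((c + s ^ p) ^ (-m - 1)), ← rpow_mul hcs.le,
    show N + (p - 2) * k = (N - k) + (p - 1) * k by ring, rpow_add hs,
    show -(m + 1) * (k : ℝ) = (-m - 1) * k by ring]
  ring

theorem deriv_flux_blissProfile (a p m N : ℝ) (k : ℕ) {c r : ℝ} (hc : 0 ≤ c) (hr : 0 < r)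
    (hrel : N + (p - 2) * k = (m + 1) * k * p) :
    deriv (fun s => s ^ (N - k) * (deriv (blissProfile a c p m) s) ^ k) r =
      (a * m * p) ^ k * ((N + (p - 2) * k) * c * r ^ (N + (p - 2) * k - 1) *
        (c + r ^ p) ^ (-(m + 1) * k - 1)) := by
  have hflux : (fun s => s ^ (N - k) * (deriv (blissProfile a c p m) s) ^ k) =ᶠ[nhds r]
      fun s => (a * m * p) ^ k * (s ^ (N + (p - 2) * k) * (c + s ^ p) ^ (-(m + 1) * k)) := by
    filter_upwards [isOpen_Ioi.mem_nhds hr] with s hs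
    exact flux_blissProfile_eq a p m N k hc hs
  rw [hflux.deriv_eq]
  refine ((hasDerivAt_rpow_mul_add_rpow_rpow hc hr ?_).const_mul _).deriv
  linear_combination hrel

theorem mul_rpow_eq_pow_mul_of_mul_sub_eq_one {lam B α q : ℝ} {k : ℕ} (hlam : 0 < lam)
    (hB : 0 < B) (h : α * (q - k) = 1) :
    lam * (lam ^ (-α) * B ^ α) ^ q = (lam ^ (-α) * B ^ α) ^ k * B := by
  have hA : 0 < lam ^ (-α) * B ^ α := by positivity
  have hAqk : (lam ^ (-α) * B ^ α) ^ (q - k) = B / lam := by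
    rw [mul_rpow (rpow_nonneg hlam.le _) (rpow_nonneg hB.le _), ← rpow_mul hlam.le,
      ← rpow_mul hB.le, neg_mul, h, rpow_neg_one, rpow_one]
    ring
  rw [show q = k + (q - k) by ring, rpow_add hA, rpow_natCast, hAqk]
  field_simp

theorem blissProfile_solves {a c p m q N σ κ lam r : ℝ} {k : ℕ} (ha : 0 ≤ a) (hc : 0 ≤ c)
    (hr : 0 < r) (hp : (p - 2) * k = σ) (hrel : N + σ = (m + 1) * k * p)
    (hmq : m * q = (m + 1) * k + 1) (hconst : κ * (a * m * p) ^ k * (N + σ) * c = lam * a ^ q) :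
    κ * r ^ (1 - N) * deriv (fun s => s ^ (N - k) * (deriv (blissProfile a c p m) s) ^ k) r =
      lam * r ^ σ * (-(blissProfile a c p m r)) ^ q := by
  have hr' : r ^ (1 - N) * r ^ (N + σ - 1) = r ^ σ := by
    rw [← rpow_add hr]; ring_nf
  rw [deriv_flux_blissProfile a p m N k hc hr (by rw [hp, hrel]), hp, blissProfile, neg_neg,
    mul_rpow ha (by positivity), ← rpow_mul (by positivity),
    show -m * q = -(m + 1) * k - 1 by linear_combination -hmq, ← hr']
  linear_combination (r ^ (1 - N) * r ^ (N + σ - 1) * (c + r ^ p) ^ (-(m + 1) * k - 1)) * hconst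

/-- the Bliss-type function `w_c` solves
`c_{n,k} r^{1-n}(r^{n-k}(w_c')^k)' = λ r^σ (-w_c)^{q*(k,σ)}` for all `r > 0`. -/
theorem bliss_function_solves (n k : ℕ) (hk : 1 ≤ k) (hn : 2 * k < n)
    (σ : ℝ) (hσ : 0 ≤ σ) (lam c : ℝ) (hlam : 0 < lam) (hc : 0 < c) :
    ∀ r : ℝ, 0 < r →
      cnk n k * r ^ (1 - (n : ℝ)) *
          deriv (fun s => s ^ ((n : ℝ) - k) * (deriv (wFun n k σ lam c) s) ^ k) r =
        lam * r ^ σ * (-(wFun n k σ lam c r)) ^ (qstar n k σ) := by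
  intro r hr
  have hk0 : (0 : ℝ) < k := by exact_mod_cast hk
  have hnk : (0 : ℝ) < n - 2 * k := by
    have : ((2 * k : ℕ) : ℝ) < n := by exact_mod_cast hn
    push_cast at this; linarith
  have hn0 : (0 : ℝ) < n := by linarith
  have hσk : (0 : ℝ) < 2 * k + σ := by linarith
  set α : ℝ := (n - 2 * k) / ((2 * k + σ) * (k + 1)) with hα
  set B : ℝ := c * n.choose k * ((n + σ) / n) * ((n - 2 * k) / k) ^ k with hB
  have hB0 : 0 < B := by
    have : (0 : ℝ) < n.choose k := by exact_mod_cast Nat.choose_pos (by omega)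
    have := div_pos hnk hk0
    positivity
  have hAq := mul_rpow_eq_pow_mul_of_mul_sub_eq_one (k := k) hlam hB0
    (by rw [hα, qstar]; field_simp; ring : α * (qstar n k σ - k) = 1)
  refine blissProfile_solves (by positivity) hc.le hr (by field_simp; ring)
    (by field_simp; ring) (by rw [qstar]; field_simp; ring) ?_
  rw [hAq, mul_assoc (lam ^ (-α) * B ^ α), mul_pow,
    show (n - 2 * k) / (2 * k + σ) * ((2 * k + σ) / k) = ((n : ℝ) - 2 * k) / k by field_simp,
    hB, cnk]
  field_simp
end
end

section
/- Assume n > 2k + 8 + 4σ/k. Define f_{k,σ}(q) = 2q(2k+σ)/(k(q-k)) + (2(2k+σ)/k)·√(q/(q-k)) + (2k+σ)(k-1)/(q-k) for q > k. Then q_JL(k,σ) satisfies the equation n - 2k = f_{k,σ}(q_JL(k,σ)), and moreover q*(k,σ) < q_JL(k,σ). -/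
/-!
Substitute `t = √(q/(q-k))`, i.e. `q = k t²/(t²-1)` with `t > 1`. Then
`f_{k,σ}(q) = (2k+σ)((k+1)t² + 2t - (k-1))/k`, so `n - 2k = f_{k,σ}(q)` is a quadratic equation
in `t` whose discriminant is the radicand in `q_JL`, and `q_JL` is `k t²/(t²-1)` at its positive
root. Since the quadratic takes the value `4(2k+σ)/k` at `t = 1`, that root exceeds `1` exactly
when `n > 2k + 8 + 4σ/k`; and `q* < k t²/(t²-1)` reduces to `t > -1`.
-/

open Real Set Filter MeasureTheory

/-- The function `f_{k,σ}`. -/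
noncomputable def jlFun (K σ q : ℝ) : ℝ :=
  2 * q * (2 * K + σ) / (K * (q - K)) + 2 * (2 * K + σ) / K * Real.sqrt (q / (q - K)) +
    (2 * K + σ) * (K - 1) / (q - K)

section
variable {K N σ t D : ℝ}

lemma mul_sq_div_sq_sub_one_sub_self (hK : K ≠ 0) (ht : t ^ 2 ≠ 1) :
    K * t ^ 2 / (t ^ 2 - 1) - K = K / (t ^ 2 - 1) := by
  have : t ^ 2 - 1 ≠ 0 := sub_ne_zero.mpr ht
  field_simp
  ring

lemma mul_sq_div_sq_sub_one_div_sub_self (hK : K ≠ 0) (ht : t ^ 2 ≠ 1) :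
    K * t ^ 2 / (t ^ 2 - 1) / (K * t ^ 2 / (t ^ 2 - 1) - K) = t ^ 2 := by
  have : t ^ 2 - 1 ≠ 0 := sub_ne_zero.mpr ht
  rw [mul_sq_div_sq_sub_one_sub_self hK ht]
  field_simp

lemma jlFun_mul_sq_div_sq_sub_one (hK : K ≠ 0) (ht₀ : 0 ≤ t) (ht₁ : t ^ 2 ≠ 1) :
    jlFun K σ (K * t ^ 2 / (t ^ 2 - 1)) =
      (2 * K + σ) * ((K + 1) * t ^ 2 + 2 * t - (K - 1)) / K := by
  have : t ^ 2 - 1 ≠ 0 := sub_ne_zero.mpr ht₁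
  rw [jlFun, mul_sq_div_sq_sub_one_div_sub_self hK ht₁, sqrt_sq ht₀,
    mul_sq_div_sq_sub_one_sub_self hK ht₁]
  field_simp
  ring

lemma jl_quadratic_of_sq_eq (hc : (K + 1) * (2 * K + σ) ≠ 0)
    (hD : ((K + 1) * (2 * K + σ) * t + (2 * K + σ)) ^ 2 =
      K * (2 * K + σ) * ((K + 1) * N - K * (2 - σ))) :
    (2 * K + σ) * ((K + 1) * t ^ 2 + 2 * t - (K - 1)) = K * (N - 2 * K) :=
  mul_left_cancel₀ hc (by linear_combination hD)

section
variable (hquad : (2 * K + σ) * ((K + 1) * t ^ 2 + 2 * t - (K - 1)) = K * (N - 2 * K))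
include hquad

lemma jl_formula_eq (hc : (K + 1) ^ 2 * (2 * K + σ) ≠ 0)
    (hD : D = (K + 1) * (2 * K + σ) * t + (2 * K + σ)) :
    K * ((K * (K + 1) * N - K ^ 2 * (2 - σ) + 2 * K + σ - 2 * D) /
      (K * (K + 1) * N - 2 * K ^ 2 * (K + 3) - 2 * K * σ - 2 * D)) = K * t ^ 2 / (t ^ 2 - 1) := by
  have hnum : K * (K + 1) * N - K ^ 2 * (2 - σ) + 2 * K + σ - 2 * D =
      (K + 1) ^ 2 * (2 * K + σ) * t ^ 2 := by
    subst hD; linear_combination (-(K + 1)) * hquad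
  have hden : K * (K + 1) * N - 2 * K ^ 2 * (K + 3) - 2 * K * σ - 2 * D =
      (K + 1) ^ 2 * (2 * K + σ) * (t ^ 2 - 1) := by
    subst hD; linear_combination (-(K + 1)) * hquad
  rw [hnum, hden, mul_div_mul_left _ _ hc, mul_div_assoc]

lemma one_lt_of_jl_quadratic (hK : 0 < K) (hc : 0 < 2 * K + σ)
    (hD₀ : 0 ≤ (K + 1) * (2 * K + σ) * t + (2 * K + σ))
    (hgap : 4 * (2 * K + σ) < K * (N - 2 * K)) :
    1 < t := by
  have hroot : 0 ≤ (K + 1) * t + 1 := by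
    by_contra! h
    nlinarith
  by_contra! ht
  -- the quadratic is increasing on `(K + 1) t ≥ -1` and equals `4 (2K + σ)` at `t = 1`
  have : (2 * K + σ) * ((K + 1) * t ^ 2 + 2 * t - (K - 1)) ≤ 4 * (2 * K + σ) := by
    nlinarith [mul_nonneg (mul_nonneg hc.le (sub_nonneg.mpr ht))
      (by linarith : 0 ≤ (K + 1) * t + 1 + K + 2)]
  linarith

lemma critical_lt_of_jl_quadratic (hK : 0 < K) (hc : 0 < 2 * K + σ) (ht : 1 < t) :
    ((N + 2) * K + σ * (K + 1)) / (N - 2 * K) < K * t ^ 2 / (t ^ 2 - 1) := by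
  have ht2 : 0 < t ^ 2 - 1 := by nlinarith
  have hN : 0 < N - 2 * K := by
    have : 0 < (2 * K + σ) * ((K + 1) * t ^ 2 + 2 * t - (K - 1)) := by
      apply mul_pos hc; nlinarith
    nlinarith
  rw [div_lt_div_iff₀ hN ht2]
  nlinarith [mul_pos hc (by linarith : 0 < t + 1)]

end

end

theorem qJL_characterization_general (n k : ℕ) (hk : 1 ≤ k)
    (σ : ℝ) (hσ : 0 ≤ σ) (hn : 2 * (k : ℝ) + 8 + 4 * σ / k < n) :
    (n : ℝ) - 2 * k =
      2 * qJL n k σ * (2 * (k : ℝ) + σ) / ((k : ℝ) * (qJL n k σ - k)) +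
        2 * (2 * (k : ℝ) + σ) / k * Real.sqrt (qJL n k σ / (qJL n k σ - k)) +
        (2 * (k : ℝ) + σ) * ((k : ℝ) - 1) / (qJL n k σ - k) ∧
    qstar n k σ < qJL n k σ := by
  have hK : (0 : ℝ) < k := by exact_mod_cast hk
  have hc : 0 < 2 * (k : ℝ) + σ := by positivity
  have hgap : 4 * (2 * (k : ℝ) + σ) < k * (n - 2 * k) := by
    have := mul_lt_mul_of_pos_left hn hK
    field_simp at this
    linarith
  have hdisc : 0 ≤ (k : ℝ) * (2 * k + σ) * (((k : ℝ) + 1) * n - k * (2 - σ)) := by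
    have : 0 ≤ ((k : ℝ) + 1) * n - k * (2 - σ) := by nlinarith
    positivity
  set D := √((k : ℝ) * (2 * k + σ) * (((k : ℝ) + 1) * n - k * (2 - σ)))
  obtain ⟨t, hDt⟩ : ∃ t, D = ((k : ℝ) + 1) * (2 * k + σ) * t + (2 * k + σ) :=
    ⟨(D - (2 * k + σ)) / (((k : ℝ) + 1) * (2 * k + σ)), by field_simp; ring⟩
  have hD2 : D ^ 2 = _ := sq_sqrt hdisc
  rw [hDt] at hD2
  have hquad := jl_quadratic_of_sq_eq (mul_pos (by positivity) hc).ne' hD2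
  have ht : 1 < t := one_lt_of_jl_quadratic hquad hK hc (hDt ▸ sqrt_nonneg _) hgap
  have hq : qJL n k σ = k * t ^ 2 / (t ^ 2 - 1) :=
    jl_formula_eq hquad (mul_pos (by positivity) hc).ne' hDt
  have hf :=
    jlFun_mul_sq_div_sq_sub_one (σ := σ) hK.ne' (by linarith) (by nlinarith : t ^ 2 ≠ 1)
  rw [hquad, mul_div_cancel_left₀ _ hK.ne'] at hf
  rw [hq]
  exact ⟨hf.symm, critical_lt_of_jl_quadratic hquad hK hc ht⟩

/-- for `n > 2k + 8 + 4σ/k`, the exponent `q_JL(k,σ)` solves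
`n - 2k = f_{k,σ}(q)` and satisfies `q*(k,σ) < q_JL(k,σ)`. -/
theorem qJL_characterization (n k : ℕ) (hk : 1 ≤ k) (hnk : 2 * k < n)
    (σ : ℝ) (hσ : 0 ≤ σ) (hn : 2 * (k : ℝ) + 8 + 4 * σ / k < n) :
    (n : ℝ) - 2 * k =
      2 * qJL n k σ * (2 * (k : ℝ) + σ) / ((k : ℝ) * (qJL n k σ - k)) +
        2 * (2 * (k : ℝ) + σ) / k * Real.sqrt (qJL n k σ / (qJL n k σ - k)) +
        (2 * (k : ℝ) + σ) * ((k : ℝ) - 1) / (qJL n k σ - k) ∧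
    qstar n k σ < qJL n k σ :=
  qJL_characterization_general n k hk σ hσ hn
end

section
/- Assume n > 2k + 8 + 4σ/k and q > q*(k,σ). With a_σ = q(n-2k) - (n+σ)k, define the discriminant Δ = (q-k)^{-2}·{[(2k+σ) - a_σ]² - 4·((2k+σ)(q-k)/k)·a_σ}. Then Δ ≥ 0 if and only if q ≥ q_JL(k,σ), and Δ < 0 if and only if q*(k,σ) < q < q_JL(k,σ). -/
/-!
Write `P = 2k + σ`, `R = k P ((k + 1) n - k (2 - σ))` and `q_JL = k (A - 2√R) / (B - 2√R)`.
Since `B² - 4R = k (k + 1)² α` with `α = (n - 2k)(k (n - 2k) - 4P) > 0`, the bracket of `Δ`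
factors, up to a positive constant, as `α (q (B - 2√R) - k (A - 2√R)) (q (B + 2√R) - k (A + 2√R))`.
At `q = q*` one has `a_σ = P`, so the bracket equals `-4P² (q* - k) / k < 0`: the two linear
factors have opposite signs there, and as the second one is the larger for `q ≥ k`, it is positive
at `q*`, hence for every `q > q*`. The sign of `Δ` is then that of `q (B - 2√R) - k (A - 2√R)`.
-/

open Real Set Filter MeasureTheory

noncomputable section

section

variable (N K σ : ℝ)

-- `discNum` is the bracket of `Δ`, and `q_JL = k (jlA - 2√jlRad) / (jlB - 2√jlRad)`.
def aSigma (q : ℝ) : ℝ := q * (N - 2 * K) - (N + σ) * K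

def discNum (q : ℝ) : ℝ :=
  ((2 * K + σ) - aSigma N K σ q) ^ 2 - 4 * ((2 * K + σ) * (q - K) / K) * aSigma N K σ q

def jlA : ℝ := K * (K + 1) * N - K ^ 2 * (2 - σ) + 2 * K + σ

def jlB : ℝ := K * (K + 1) * N - 2 * K ^ 2 * (K + 3) - 2 * K * σ

def jlRad : ℝ := K * (2 * K + σ) * ((K + 1) * N - K * (2 - σ))

theorem jlB_eq :
    jlB N K σ = (K + 1) * (K * (N - 2 * K) - 4 * (2 * K + σ)) + 2 * (K + 2) * (2 * K + σ) := by
  unfold jlB; ring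

theorem jlB_sq_sub_four_mul_jlRad :
    jlB N K σ ^ 2 - 4 * jlRad N K σ =
      K * (K + 1) ^ 2 * (N - 2 * K) * (K * (N - 2 * K) - 4 * (2 * K + σ)) := by
  unfold jlB jlRad; ring

theorem aSigma_qstar (hN : N - 2 * K ≠ 0) :
    aSigma N K σ (((N + 2) * K + σ * (K + 1)) / (N - 2 * K)) = 2 * K + σ := by
  unfold aSigma; field_simp; ring

theorem qstar_sub_eq (hN : N - 2 * K ≠ 0) :
    ((N + 2) * K + σ * (K + 1)) / (N - 2 * K) - K = (K + 1) * (2 * K + σ) / (N - 2 * K) := by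
  field_simp; ring

theorem mul_discNum_eq (q s : ℝ) (hK : K ≠ 0) (hs : s ^ 2 = jlRad N K σ) :
    (jlB N K σ - 2 * s) * (jlB N K σ + 2 * s) * (K * discNum N K σ q) =
      (N - 2 * K) * (K * (N - 2 * K) - 4 * (2 * K + σ)) *
        ((q * (jlB N K σ - 2 * s) - K * (jlA N K σ - 2 * s)) *
          (q * (jlB N K σ + 2 * s) - K * (jlA N K σ + 2 * s))) := by
  have hKdisc : K * discNum N K σ q =
      K * (2 * K + σ - aSigma N K σ q) ^ 2 - 4 * (2 * K + σ) * (q - K) * aSigma N K σ q := by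
    unfold discNum; field_simp
  rw [hKdisc]
  unfold aSigma jlA jlB
  unfold jlRad at hs
  linear_combination (4 * (N - 2 * K) * (K * (N - 2 * K) - 4 * (2 * K + σ)) * (q - K) ^ 2
    - 4 * (K * (2 * K + σ - (q * (N - 2 * K) - (N + σ) * K)) ^ 2
      - 4 * (2 * K + σ) * (q - K) * (q * (N - 2 * K) - (N + σ) * K))) * hs

end

section

variable {N K σ : ℝ} (hK : 0 < K) (hP : 0 < 2 * K + σ) (hN : 4 * (2 * K + σ) < K * (N - 2 * K))
include hK hP hN

theorem sub_two_mul_pos : 0 < N - 2 * K :=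
  pos_of_mul_pos_right (by linarith) hK.le

theorem jlRad_nonneg : 0 ≤ jlRad N K σ := by
  have hm := sub_two_mul_pos hK hP hN
  have hE : (K + 1) * N - K * (2 - σ) = (K + 1) * (N - 2 * K) + K * (2 * K + σ) := by ring
  unfold jlRad
  rw [hE]
  positivity

theorem two_mul_sqrt_jlRad_lt_jlB : 2 * √(jlRad N K σ) < jlB N K σ := by
  have hm := sub_two_mul_pos hK hP hN
  have hδ : 0 < K * (N - 2 * K) - 4 * (2 * K + σ) := by linarith
  have hB : 0 < jlB N K σ := by rw [jlB_eq]; positivity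
  have hdisc := jlB_sq_sub_four_mul_jlRad N K σ
  have : 0 < jlB N K σ ^ 2 - 4 * jlRad N K σ := by rw [hdisc]; positivity
  rw [← lt_div_iff₀' two_pos, Real.sqrt_lt' (by positivity)]
  linarith

theorem discNum_qstar_neg : discNum N K σ (((N + 2) * K + σ * (K + 1)) / (N - 2 * K)) < 0 := by
  have hm := sub_two_mul_pos hK hP hN
  unfold discNum
  rw [aSigma_qstar N K σ hm.ne', qstar_sub_eq N K σ hm.ne', sub_self, zero_pow two_ne_zero,
    zero_sub, neg_lt_zero]
  positivity

theorem lt_qstar : K < ((N + 2) * K + σ * (K + 1)) / (N - 2 * K) := by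
  have hm := sub_two_mul_pos hK hP hN
  rw [← sub_pos, qstar_sub_eq N K σ hm.ne']
  positivity

theorem jl_plus_factor_pos {q : ℝ} (hq : ((N + 2) * K + σ * (K + 1)) / (N - 2 * K) ≤ q) :
    0 < q * (jlB N K σ + 2 * √(jlRad N K σ)) - K * (jlA N K σ + 2 * √(jlRad N K σ)) := by
  set q₀ := ((N + 2) * K + σ * (K + 1)) / (N - 2 * K)
  set s := √(jlRad N K σ)
  have hs0 : 0 ≤ s := Real.sqrt_nonneg _
  have hBs := two_mul_sqrt_jlRad_lt_jlB hK hP hN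
  have hq₀K : K < q₀ := lt_qstar hK hP hN
  have hprod : (q₀ * (jlB N K σ - 2 * s) - K * (jlA N K σ - 2 * s)) *
      (q₀ * (jlB N K σ + 2 * s) - K * (jlA N K σ + 2 * s)) < 0 := by
    have hfac := mul_discNum_eq N K σ q₀ s hK.ne' (Real.sq_sqrt (jlRad_nonneg hK hP hN))
    have : (jlB N K σ - 2 * s) * (jlB N K σ + 2 * s) * (K * discNum N K σ q₀) < 0 :=
      mul_neg_of_pos_of_neg (mul_pos (by linarith) (by linarith))
        (mul_neg_of_pos_of_neg hK (discNum_qstar_neg hK hP hN))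
    rw [hfac] at this
    exact neg_of_mul_neg_right this (mul_pos (sub_two_mul_pos hK hP hN) (by linarith)).le
  have hplus₀ : 0 < q₀ * (jlB N K σ + 2 * s) - K * (jlA N K σ + 2 * s) := by
    by_contra! h
    have hminus : q₀ * (jlB N K σ - 2 * s) - K * (jlA N K σ - 2 * s) ≤ 0 := by
      nlinarith [mul_nonneg hs0 (sub_nonneg.2 hq₀K.le)]
    exact hprod.not_ge (mul_nonneg_of_nonpos_of_nonpos hminus h)
  nlinarith [mul_nonneg (sub_nonneg.2 hq) (by linarith : 0 ≤ jlB N K σ + 2 * s)]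

theorem discNum_nonneg_iff {q : ℝ} (hq : ((N + 2) * K + σ * (K + 1)) / (N - 2 * K) ≤ q) :
    0 ≤ discNum N K σ q ↔
      K * ((jlA N K σ - 2 * √(jlRad N K σ)) / (jlB N K σ - 2 * √(jlRad N K σ))) ≤ q := by
  set s := √(jlRad N K σ)
  have hBs : 0 < jlB N K σ - 2 * s := sub_pos.2 (two_mul_sqrt_jlRad_lt_jlB hK hP hN)
  have hc : 0 < (jlB N K σ - 2 * s) * (jlB N K σ + 2 * s) :=
    mul_pos hBs (by linarith [Real.sqrt_nonneg (jlRad N K σ)])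
  have hα : 0 < (N - 2 * K) * (K * (N - 2 * K) - 4 * (2 * K + σ)) :=
    mul_pos (sub_two_mul_pos hK hP hN) (by linarith)
  rw [← mul_nonneg_iff_of_pos_left (mul_pos hc hK), mul_assoc,
    mul_discNum_eq N K σ q s hK.ne' (Real.sq_sqrt (jlRad_nonneg hK hP hN)),
    mul_nonneg_iff_of_pos_left hα, mul_nonneg_iff_of_pos_right (jl_plus_factor_pos hK hP hN hq),
    sub_nonneg, mul_div_assoc', div_le_iff₀ hBs]

end

theorem discriminant_sign_general (n k : ℕ) (hk : 1 ≤ k)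
    (q σ : ℝ) (hσ : 0 ≤ σ) (hn : 2 * (k : ℝ) + 8 + 4 * σ / k < n)
    (hq : qstar n k σ < q) :
    (0 ≤ (q - (k : ℝ)) ^ (-2 : ℤ) *
        (((2 * (k : ℝ) + σ) - (q * ((n : ℝ) - 2 * k) - ((n : ℝ) + σ) * k)) ^ 2 -
          4 * ((2 * (k : ℝ) + σ) * (q - k) / k) *
            (q * ((n : ℝ) - 2 * k) - ((n : ℝ) + σ) * k)) ↔
      qJL n k σ ≤ q) ∧
    ((q - (k : ℝ)) ^ (-2 : ℤ) *
        (((2 * (k : ℝ) + σ) - (q * ((n : ℝ) - 2 * k) - ((n : ℝ) + σ) * k)) ^ 2 -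
          4 * ((2 * (k : ℝ) + σ) * (q - k) / k) *
            (q * ((n : ℝ) - 2 * k) - ((n : ℝ) + σ) * k)) < 0 ↔
      (qstar n k σ < q ∧ q < qJL n k σ)) := by
  have hK : (0 : ℝ) < k := by exact_mod_cast hk
  have hP : 0 < 2 * (k : ℝ) + σ := by linarith
  have hN : 4 * (2 * (k : ℝ) + σ) < k * (n - 2 * k) := by
    have : 4 * σ / k < n - 2 * k - 8 := by linarith
    rw [div_lt_iff₀ hK] at this
    linarith
  have hqk : (k : ℝ) < q := (lt_qstar hK hP hN).trans hq
  have hpos : 0 < (q - (k : ℝ)) ^ (-2 : ℤ) := zpow_pos (sub_pos.2 hqk) _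
  change (0 ≤ _ * discNum n k σ q ↔ _) ∧ (_ * discNum n k σ q < 0 ↔ _)
  have hsign : 0 ≤ discNum n k σ q ↔ qJL n k σ ≤ q := discNum_nonneg_iff hK hP hN hq.le
  rw [mul_nonneg_iff_of_pos_left hpos, hsign, ← not_le, mul_nonneg_iff_of_pos_left hpos, hsign,
    not_le]
  exact ⟨Iff.rfl, fun h => ⟨hq, h⟩, fun h => h.2⟩

/-- for `n > 2k+8+4σ/k` and `q > q*(k,σ)`, the discriminant
`Δ = (q-k)^{-2}{[(2k+σ)-a_σ]² - 4((2k+σ)(q-k)/k)a_σ}` of the Jacobian at `(x̂,ŷ)` is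
nonnegative iff `q ≥ q_JL(k,σ)` and negative iff `q*(k,σ) < q < q_JL(k,σ)`. -/
theorem discriminant_sign (n k : ℕ) (hk : 1 ≤ k) (hnk : 2 * k < n)
    (q σ : ℝ) (hσ : 0 ≤ σ) (hn : 2 * (k : ℝ) + 8 + 4 * σ / k < n)
    (hq : qstar n k σ < q) :
    (0 ≤ (q - (k : ℝ)) ^ (-2 : ℤ) *
        (((2 * (k : ℝ) + σ) - (q * ((n : ℝ) - 2 * k) - ((n : ℝ) + σ) * k)) ^ 2 -
          4 * ((2 * (k : ℝ) + σ) * (q - k) / k) *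
            (q * ((n : ℝ) - 2 * k) - ((n : ℝ) + σ) * k)) ↔
      qJL n k σ ≤ q) ∧
    ((q - (k : ℝ)) ^ (-2 : ℤ) *
        (((2 * (k : ℝ) + σ) - (q * ((n : ℝ) - 2 * k) - ((n : ℝ) + σ) * k)) ^ 2 -
          4 * ((2 * (k : ℝ) + σ) * (q - k) / k) *
            (q * ((n : ℝ) - 2 * k) - ((n : ℝ) + σ) * k)) < 0 ↔
      (qstar n k σ < q ∧ q < qJL n k σ)) :=
  discriminant_sign_general n k hk q σ hσ hn hq
end
end

section
/- Let q ≥ q*(k,σ), let λ̄ > 0, and let v ∈ C²((0,∞)) ∩ C¹([0,∞)) be the unique global solution of (s^{n-k}(v'(s))^k)' = λ̄ s^{n-1+σ} (-v(s))^q for s > 0 with v(0) = -1 and v'(0) = 0. Then lim_{r→0⁺} r·v'(r)/(-v(r)) = 0 and lim_{r→0⁺} λ̄ r^{k+σ}(-v(r))^q/(v'(r))^k = n + σ; equivalently, the transformed orbit x(t) = λ̄ e^{(k+σ)t}(-v(e^t))^q/(v'(e^t))^k, y(t) = e^t v'(e^t)/(-v(e^t)) satisfies lim_{t→-∞}(x(t),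 y(t)) = (n+σ, 0). -/
open Real Set Filter MeasureTheory

open scoped Topology

noncomputable section

/-
Near the origin everything is governed by the flux `g(s) = s^{n-k} v'(s)^k`. It vanishes at `0`
because `v ∈ C¹([0,∞))`, and the equation makes its derivative `λ̄ s^{n+σ-1} (-v)^q ∼ λ̄ s^{n+σ-1}`,
so L'Hôpital's rule against `s^{n+σ}` gives `v'(r)^k / r^{k+σ} → λ̄ / (n+σ)`, that is `x → n+σ`.
The component `y = r v' / (-v)` tends to `0` simply because `v'` stays bounded and `v(0) = -1`.
-/

lemma tendsto_rpow_nhdsGT_zero {m : ℝ} (hm : 0 < m) :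
    Tendsto (fun r : ℝ => r ^ m) (𝓝[>] 0) (𝓝 0) := by
  have h := (continuousAt_rpow_const 0 m (Or.inr hm.le)).tendsto
  rw [zero_rpow hm.ne'] at h
  exact h.mono_left nhdsWithin_le_nhds

lemma tendsto_div_rpow_of_hasDerivAt {g w : ℝ → ℝ} {m L : ℝ} (hm : 0 < m)
    (hg : ∀ᶠ s in 𝓝[>] 0, HasDerivAt g (s ^ (m - 1) * w s) s)
    (hg0 : Tendsto g (𝓝[>] 0) (𝓝 0)) (hw : Tendsto w (𝓝[>] 0) (𝓝 L)) :
    Tendsto (fun r => g r / r ^ m) (𝓝[>] 0) (𝓝 (L / m)) := by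
  refine HasDerivAt.lhopital_zero_nhdsGT hg
    (eventually_nhdsWithin_of_forall fun s hs => hasDerivAt_rpow_const (Or.inl (ne_of_gt hs)))
    (eventually_nhdsWithin_of_forall fun s hs => ?_) hg0 (tendsto_rpow_nhdsGT_zero hm)
    ((hw.div_const m).congr' ?_)
  · exact mul_ne_zero hm.ne' (rpow_pos_of_pos hs _).ne'
  · filter_upwards [self_mem_nhdsWithin] with s hs
    have : s ^ (m - 1) ≠ 0 := (rpow_pos_of_pos hs _).ne'
    field_simp

lemma tendsto_neg_rpow_of_tendsto_neg_one {α : Type*} {l : Filter α} {f : α → ℝ}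
    (hf : Tendsto f l (𝓝 (-1))) (q : ℝ) : Tendsto (fun x => (-f x) ^ q) l (𝓝 1) := by
  simpa using hf.neg.rpow_const (Or.inl (by norm_num))

lemma tendsto_comp_exp_atBot {α : Type*} {f : ℝ → α} {l : Filter α}
    (hf : Tendsto f (𝓝[>] 0) l) : Tendsto (fun t => f (exp t)) atBot l :=
  hf.comp tendsto_exp_atBot_nhdsGT

namespace ContDiffOn

variable {v : ℝ → ℝ}

lemma tendsto_nhdsGT_zero (hv : ContDiffOn ℝ 1 v (Ici 0)) :
    Tendsto v (𝓝[>] 0) (𝓝 (v 0)) :=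
  (hv.continuousOn 0 self_mem_Ici).tendsto.mono_left (nhdsWithin_mono _ Ioi_subset_Ici_self)

lemma tendsto_deriv_nhdsGT_zero (hv : ContDiffOn ℝ 1 v (Ici 0)) :
    Tendsto (deriv v) (𝓝[>] 0) (𝓝 (derivWithin v (Ici 0) 0)) := by
  have h := (hv.continuousOn_derivWithin (uniqueDiffOn_Ici 0) le_rfl 0 self_mem_Ici).tendsto
  refine (h.mono_left (nhdsWithin_mono _ Ioi_subset_Ici_self)).congr' ?_
  filter_upwards [self_mem_nhdsWithin] with s hs
  exact derivWithin_of_mem_nhds (Ici_mem_nhds hs)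

lemma tendsto_rpow_mul_deriv_pow_nhdsGT_zero (hv : ContDiffOn ℝ 1 v (Ici 0)) {a : ℝ}
    (ha : 0 < a) (k : ℕ) :
    Tendsto (fun s => s ^ a * deriv v s ^ k) (𝓝[>] 0) (𝓝 0) := by
  simpa using (tendsto_rpow_nhdsGT_zero ha).mul (hv.tendsto_deriv_nhdsGT_zero.pow k)

end ContDiffOn

lemma tendsto_deriv_pow_div_rpow_of_flux_eq {n k : ℕ} {q σ lam : ℝ} {v : ℝ → ℝ}
    (hkn : k < n) (hnσ : 0 < (n : ℝ) + σ)
    (hreg2 : ContDiffOn ℝ 2 v (Ioi 0)) (hreg1 : ContDiffOn ℝ 1 v (Ici 0)) (hv0 : v 0 = -1)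
    (heq : ∀ s : ℝ, 0 < s →
      deriv (fun τ => τ ^ ((n : ℝ) - k) * (deriv v τ) ^ k) s =
        lam * s ^ ((n : ℝ) - 1 + σ) * (-v s) ^ q) :
    Tendsto (fun r => deriv v r ^ k / r ^ ((k : ℝ) + σ)) (𝓝[>] 0) (𝓝 (lam / ((n : ℝ) + σ))) := by
  have hnk : (0 : ℝ) < n - k := sub_pos.2 (Nat.cast_lt.2 hkn)
  have hw : Tendsto (fun s => lam * (-v s) ^ q) (𝓝[>] 0) (𝓝 lam) := by
    simpa using
      (tendsto_neg_rpow_of_tendsto_neg_one (hv0 ▸ hreg1.tendsto_nhdsGT_zero) q).const_mul lam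
  have hv' : DifferentiableOn ℝ (deriv v) (Ioi 0) :=
    (hreg2.deriv_of_isOpen isOpen_Ioi (by norm_num)).differentiableOn one_ne_zero
  have hflux : ∀ᶠ s in 𝓝[>] 0, HasDerivAt (fun τ => τ ^ ((n : ℝ) - k) * (deriv v τ) ^ k)
      (s ^ ((n + σ) - 1) * (lam * (-v s) ^ q)) s := by
    filter_upwards [self_mem_nhdsWithin] with s (hs : 0 < s)
    have hd : DifferentiableAt ℝ (fun τ => τ ^ ((n : ℝ) - k) * deriv v τ ^ k) s :=
      (differentiableAt_rpow_const_of_ne _ hs.ne').mul ((hv'.differentiableAt (Ioi_mem_nhds hs)).pow k)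
    have h := hd.hasDerivAt
    rw [heq s hs] at h
    refine h.congr_deriv ?_
    rw [show (n : ℝ) + σ - 1 = n - 1 + σ by ring]
    ring
  refine (tendsto_div_rpow_of_hasDerivAt hnσ hflux
    (hreg1.tendsto_rpow_mul_deriv_pow_nhdsGT_zero hnk k) hw).congr' ?_
  filter_upwards [self_mem_nhdsWithin] with r (hr : 0 < r)
  have hsplit : r ^ ((n : ℝ) + σ) = r ^ ((n : ℝ) - k) * r ^ ((k : ℝ) + σ) := by
    rw [← rpow_add hr]; ring_nf
  rw [hsplit, mul_div_mul_left _ _ (rpow_pos_of_pos hr _).ne']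

theorem orbit_starts_at_corner_general (n k : ℕ) (hn : 2 * k < n)
    (q σ lam : ℝ) (hσ : 0 ≤ σ) (hlam : 0 < lam)
    (v : ℝ → ℝ)
    (hreg2 : ContDiffOn ℝ 2 v (Ioi 0)) (hreg1 : ContDiffOn ℝ 1 v (Ici 0))
    (hv0 : v 0 = -1)
    (heq : ∀ s : ℝ, 0 < s →
      deriv (fun τ => τ ^ ((n : ℝ) - k) * (deriv v τ) ^ k) s =
        lam * s ^ ((n : ℝ) - 1 + σ) * (-v s) ^ q) :
    Tendsto (fun r => r * deriv v r / (-v r)) (nhdsWithin 0 (Ioi 0)) (nhds 0) ∧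
    Tendsto (fun r => lam * r ^ ((k : ℝ) + σ) * (-v r) ^ q / (deriv v r) ^ k)
      (nhdsWithin 0 (Ioi 0)) (nhds ((n : ℝ) + σ)) ∧
    Tendsto (fun t =>
        (lam * Real.exp (((k : ℝ) + σ) * t) * (-v (Real.exp t)) ^ q /
            (deriv v (Real.exp t)) ^ k,
          Real.exp t * deriv v (Real.exp t) / (-v (Real.exp t))))
      atBot (nhds ((n : ℝ) + σ, 0)) := by
  have hnσ : 0 < (n : ℝ) + σ := by
    have : (0 : ℝ) < n := Nat.cast_pos.2 (by omega)
    linarith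
  have hv : Tendsto v (𝓝[>] 0) (𝓝 (-1)) := hv0 ▸ hreg1.tendsto_nhdsGT_zero
  have hy : Tendsto (fun r => r * deriv v r / (-v r)) (𝓝[>] 0) (𝓝 0) := by
    have hr : Tendsto (fun r : ℝ => r) (𝓝[>] 0) (𝓝 0) := nhdsWithin_le_nhds
    have h := (hr.mul hreg1.tendsto_deriv_nhdsGT_zero).div hv.neg (by norm_num)
    rwa [zero_mul, zero_div] at h
  have hx : Tendsto (fun r => lam * r ^ ((k : ℝ) + σ) * (-v r) ^ q / deriv v r ^ k)
      (𝓝[>] 0) (𝓝 ((n : ℝ) + σ)) := by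
    have hR := tendsto_deriv_pow_div_rpow_of_flux_eq (by omega) hnσ hreg2 hreg1 hv0 heq
    have h := ((tendsto_neg_rpow_of_tendsto_neg_one hv q).const_mul lam).div hR
      (div_pos hlam hnσ).ne'
    rw [mul_one, div_div_cancel₀ hlam.ne'] at h
    refine h.congr fun r => ?_
    change lam * (-v r) ^ q / (deriv v r ^ k / r ^ ((k : ℝ) + σ)) = _
    rw [div_div_eq_mul_div]
    ring
  refine ⟨hy, hx, Tendsto.prodMk_nhds ((tendsto_comp_exp_atBot hx).congr fun t => ?_)
    (tendsto_comp_exp_atBot hy)⟩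
  rw [← exp_mul, mul_comm t]

/-- for `q ≥ q*(k,σ)` the (unique, global, negative) solution `v` of
`(s^{n-k}(v')^k)' = λ̄ s^{n-1+σ}(-v)^q`, `v(0) = -1`, `v'(0) = 0`, satisfies
`r v'(r)/(-v(r)) → 0` and `λ̄ r^{k+σ}(-v(r))^q/(v'(r))^k → n+σ` as `r → 0⁺`;
equivalently, the transformed orbit `(x(t),y(t))` tends to `(n+σ,0)` as `t → -∞`. -/
theorem orbit_starts_at_corner (n k : ℕ) (hk : 1 ≤ k) (hn : 2 * k < n)
    (q σ lam : ℝ) (hq : (k : ℝ) < q) (hσ : 0 ≤ σ) (hlam : 0 < lam)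
    (hqstar : qstar n k σ ≤ q) (v : ℝ → ℝ)
    (hreg2 : ContDiffOn ℝ 2 v (Ioi 0)) (hreg1 : ContDiffOn ℝ 1 v (Ici 0))
    (hv0 : v 0 = -1) (hv'0 : deriv v 0 = 0)
    (hneg : ∀ s : ℝ, 0 ≤ s → v s < 0)
    (heq : ∀ s : ℝ, 0 < s →
      deriv (fun τ => τ ^ ((n : ℝ) - k) * (deriv v τ) ^ k) s =
        lam * s ^ ((n : ℝ) - 1 + σ) * (-v s) ^ q) :
    Tendsto (fun r => r * deriv v r / (-v r)) (nhdsWithin 0 (Ioi 0)) (nhds 0) ∧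
    Tendsto (fun r => lam * r ^ ((k : ℝ) + σ) * (-v r) ^ q / (deriv v r) ^ k)
      (nhdsWithin 0 (Ioi 0)) (nhds ((n : ℝ) + σ)) ∧
    Tendsto (fun t =>
        (lam * Real.exp (((k : ℝ) + σ) * t) * (-v (Real.exp t)) ^ q /
            (deriv v (Real.exp t)) ^ k,
          Real.exp t * deriv v (Real.exp t) / (-v (Real.exp t))))
      atBot (nhds ((n : ℝ) + σ, 0)) :=
  orbit_starts_at_corner_general n k hn q σ lam hσ hlam v hreg2 hreg1 hv0 heq
end
end
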